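/- arXiv:math/0609280 — 9 statements merged into one kernel-verified Lean document; each statement's English description precedes it below -/
import Mathlib

section
/- Let R > 0, M > 0 and let f be holomorphic on {z ∈ ℂ : |z| ≥ R} with |f(z) − (z + 1)| ≤ M/|z| for all |z| ≥ R. Then there exist R' ≥ R and a holomorphic map u : E_{R'} → ℂ such that f maps E_{R'} into itself, u(f(z)) = u(z) + 1 for all z ∈ E_{R'}, and u(z) = z(1 + o(1)) as Re z → ∞; that is, for every δ > 0 there exists ρ ≥ R' such that |u(z)/z − 1| ≤ δ whenever z ∈ E_{R'} and Re z ≥ ρ. -/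
/-!
Near `∞` the bounded holomorphic function `z (f z - z - 1)` has a removable singularity, so
`f z = z + 1 + a / z + O(‖z‖⁻²)`. On a far right half-plane `f` moves points to the right by at
least `1/2`, and `L w = w - a log w` conjugates `f` to `z ↦ z + 1` up to an error
`O((Re z)⁻²)`, which is summable along orbits. Hence `u = L + ∑ₖ (L ∘ f - L - 1) ∘ f^[k]`
converges locally uniformly to a holomorphic Fatou coordinate with `u - L` bounded, so
`u z = z - a log z + O(1) = z (1 + o(1))`.
-/

open Complex Set Metric Filter Topology Asymptotics Bornology

theorem exists_differentiableOn_ball_eq_comp_inv {g : ℂ → ℂ} {R M : ℝ} (hR : 0 < R)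
    (hg : DifferentiableOn ℂ g {z : ℂ | R < ‖z‖}) (hM : ∀ z : ℂ, R < ‖z‖ → ‖g z‖ ≤ M) :
    ∃ G : ℂ → ℂ, DifferentiableOn ℂ G (ball 0 R⁻¹) ∧ ∀ z : ℂ, R < ‖z‖ → G z⁻¹ = g z := by
  have hinv : MapsTo (fun w : ℂ => w⁻¹) (ball 0 R⁻¹ \ {0}) {z : ℂ | R < ‖z‖} := by
    rintro w ⟨hw, hw0 : w ≠ 0⟩
    simpa [norm_inv] using (lt_inv_comm₀ (norm_pos_iff.2 hw0) hR).1 (mem_ball_zero_iff.1 hw)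
  refine ⟨Function.update (fun w => g w⁻¹) 0 (limUnder (𝓝[≠] 0) fun w => g w⁻¹),
    differentiableOn_update_limUnder_of_bddAbove (ball_mem_nhds _ (inv_pos.2 hR))
      (hg.comp (differentiableOn_inv.mono fun w hw => hw.2) hinv)
      ⟨M, forall_mem_image.2 fun w hw => hM _ (hinv hw)⟩, fun z hz => ?_⟩
  have hz0 : z⁻¹ ≠ 0 := inv_ne_zero (norm_pos_iff.1 (hR.trans hz))
  simp [Function.update_of_ne hz0]

theorem exists_norm_sub_le_mul_norm_of_differentiableOn_ball {G : ℂ → ℂ} {r r' : ℝ}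
    (hr : 0 < r) (hr' : r' < r) (hG : DifferentiableOn ℂ G (ball 0 r)) :
    ∃ C : ℝ, 0 ≤ C ∧ ∀ w ∈ closedBall (0 : ℂ) r', ‖G w - G 0‖ ≤ C * ‖w‖ := by
  have hslope : DifferentiableOn ℂ (dslope G 0) (ball 0 r) :=
    (differentiableOn_dslope (ball_mem_nhds _ hr)).2 hG
  obtain ⟨C, hC⟩ := (isCompact_closedBall (0 : ℂ) r').exists_bound_of_continuousOn
    (hslope.continuousOn.mono (closedBall_subset_ball hr'))
  refine ⟨max C 0, le_max_right _ _, fun w hw => ?_⟩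
  rw [← sub_smul_dslope, sub_zero, smul_eq_mul, norm_mul, mul_comm]
  gcongr
  exact (hC w hw).trans (le_max_left _ _)

theorem exists_norm_sub_le_div_norm_of_bounded {g : ℂ → ℂ} {R M : ℝ} (hR : 0 < R)
    (hg : DifferentiableOn ℂ g {z : ℂ | R < ‖z‖}) (hM : ∀ z : ℂ, R < ‖z‖ → ‖g z‖ ≤ M) :
    ∃ a : ℂ, ∃ C : ℝ, 0 ≤ C ∧ ∀ z : ℂ, 2 * R ≤ ‖z‖ → ‖g z - a‖ ≤ C / ‖z‖ := by
  obtain ⟨G, hG, hGg⟩ := exists_differentiableOn_ball_eq_comp_inv hR hg hM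
  obtain ⟨C, hC0, hC⟩ := exists_norm_sub_le_mul_norm_of_differentiableOn_ball (inv_pos.2 hR)
    (inv_strictAnti₀ hR (by linarith : R < 2 * R)) hG
  refine ⟨G 0, C, hC0, fun z hz => ?_⟩
  have hRz : R < ‖z‖ := by linarith
  have hz : z⁻¹ ∈ closedBall (0 : ℂ) (2 * R)⁻¹ := by
    rw [mem_closedBall_zero_iff, norm_inv]
    exact inv_anti₀ (by positivity) hz
  calc ‖g z - G 0‖ = ‖G z⁻¹ - G 0‖ := by rw [hGg z hRz]
    _ ≤ C * ‖z⁻¹‖ := hC _ hz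
    _ = C / ‖z‖ := by rw [norm_inv, div_eq_mul_inv]

theorem re_add_half_le_re_of_norm_sub_add_one_le {z w : ℂ} (h : ‖w - (z + 1)‖ ≤ 1 / 2) :
    z.re + 1 / 2 ≤ w.re := by
  have := (abs_le.1 ((abs_re_le_norm _).trans h)).1
  simp only [sub_re, add_re, one_re] at this
  linarith

theorem norm_sub_le_of_norm_sub_add_one_le {z w : ℂ} (h : ‖w - (z + 1)‖ ≤ 1 / 2) :
    ‖w - z‖ ≤ 3 / 2 :=
  calc ‖w - z‖ = ‖(w - (z + 1)) + 1‖ := by ring_nf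
    _ ≤ ‖w - (z + 1)‖ + ‖(1 : ℂ)‖ := norm_add_le _ _
    _ ≤ 3 / 2 := by rw [norm_one]; linarith

theorem norm_log_sub_log_sub_div_le {z w : ℂ} (hz : 0 < z.re) (hzw : z.re ≤ w.re) :
    ‖log w - log z - (w - z) / z‖ ≤ ‖w - z‖ ^ 2 / z.re ^ 2 := by
  have hseg : segment ℝ z w ⊆ {ξ : ℂ | z.re ≤ ξ.re} ∩ closedBall z ‖w - z‖ :=
    ((convex_halfSpace_re_ge z.re).inter (convex_closedBall _ _)).segment_subset
      ⟨show z.re ≤ z.re from le_rfl, mem_closedBall_self (norm_nonneg _)⟩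
      ⟨hzw, by simp [mem_closedBall, dist_eq_norm]⟩
  have hderiv : ∀ ξ ∈ segment ℝ z w,
      HasDerivWithinAt (fun ξ => log ξ - ξ / z) (ξ⁻¹ - z⁻¹) (segment ℝ z w) ξ := by
    intro ξ hξ
    have hslit : ξ ∈ slitPlane := Or.inl (hz.trans_le (hseg hξ).1)
    simpa [div_eq_mul_inv] using
      ((hasDerivAt_log hslit).fun_sub (hasDerivAt_mul_const z⁻¹)).hasDerivWithinAt
  have hbound : ∀ ξ ∈ segment ℝ z w, ‖ξ⁻¹ - z⁻¹‖ ≤ ‖w - z‖ / z.re ^ 2 := by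
    intro ξ hξ
    obtain ⟨hre : z.re ≤ ξ.re, hball⟩ := hseg hξ
    have hξ0 : ξ ≠ 0 := fun h => by simp [h] at hre; linarith
    have hz0 : z ≠ 0 := fun h => by simp [h] at hz
    have hξz : ‖z - ξ‖ ≤ ‖w - z‖ := by rw [← dist_eq_norm, dist_comm]; exact hball
    rw [inv_sub_inv hξ0 hz0, norm_div, norm_mul, sq]
    gcongr
    · exact hre.trans (re_le_norm ξ)
    · exact re_le_norm z
  have := (convex_segment z w).norm_image_sub_le_of_norm_hasDerivWithin_le hderiv hbound
    (left_mem_segment ℝ z w) (right_mem_segment ℝ z w)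
  calc ‖log w - log z - (w - z) / z‖ = ‖(log w - w / z) - (log z - z / z)‖ := by ring_nf
    _ ≤ ‖w - z‖ / z.re ^ 2 * ‖w - z‖ := this
    _ = ‖w - z‖ ^ 2 / z.re ^ 2 := by ring

theorem norm_sub_mul_log_defect_le {a z w : ℂ} {C M : ℝ} (hC : 0 ≤ C) (hM : 0 ≤ M)
    (hz : 0 < z.re) (ha : ‖z * (w - z - 1) - a‖ ≤ C / ‖z‖) (hwM : ‖w - (z + 1)‖ ≤ M / ‖z‖)
    (hw : ‖w - (z + 1)‖ ≤ 1 / 2) :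
    ‖(w - a * log w) - (z - a * log z) - 1‖ ≤ (C + ‖a‖ * M + 9 / 4 * ‖a‖) / z.re ^ 2 := by
  have hz0 : z ≠ 0 := fun h => by simp [h] at hz
  set D := log w - log z - (w - z) / z
  have hD : ‖D‖ ≤ 9 / 4 / z.re ^ 2 := calc
    ‖D‖ ≤ ‖w - z‖ ^ 2 / z.re ^ 2 := norm_log_sub_log_sub_div_le hz
      (by linarith [re_add_half_le_re_of_norm_sub_add_one_le hw])
    _ ≤ (3 / 2) ^ 2 / z.re ^ 2 := by gcongr; exact norm_sub_le_of_norm_sub_add_one_le hw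
    _ = 9 / 4 / z.re ^ 2 := by norm_num
  have hdiv : ∀ {c : ℝ} {x : ℂ}, ‖x‖ ≤ c / ‖z‖ → ‖x / z‖ ≤ c / ‖z‖ ^ 2 := fun hx => by
    rw [norm_div, sq, ← div_div]
    gcongr
  -- the `a / z` term of `w - z - 1` is what `a * log` compensates
  have hid : (w - a * log w) - (z - a * log z) - 1
      = (z * (w - z - 1) - a) / z - a * ((w - (z + 1)) / z) - a * D := by
    simp only [D]
    field_simp
    ring
  rw [hid]
  calc _ ≤ ‖(z * (w - z - 1) - a) / z‖ + ‖a‖ * ‖(w - (z + 1)) / z‖ + ‖a‖ * ‖D‖ := by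
        refine (norm_sub_le _ _).trans ?_
        rw [norm_mul]
        gcongr
        exact (norm_sub_le _ _).trans_eq (by rw [norm_mul])
    _ ≤ C / ‖z‖ ^ 2 + ‖a‖ * (M / ‖z‖ ^ 2) + ‖a‖ * (9 / 4 / z.re ^ 2) := by
        gcongr
        exacts [hdiv ha, hdiv hwM]
    _ ≤ C / z.re ^ 2 + ‖a‖ * (M / z.re ^ 2) + ‖a‖ * (9 / 4 / z.re ^ 2) := by
        gcongr <;> exact re_le_norm z
    _ = (C + ‖a‖ * M + 9 / 4 * ‖a‖) / z.re ^ 2 := by ring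

noncomputable def fatouCoord (f L : ℂ → ℂ) (z : ℂ) : ℂ :=
  L z + ∑' k : ℕ, (L (f (f^[k] z)) - L (f^[k] z) - 1)

structure IsApproxFatouCoord (f L : ℂ → ℂ) (R₀ K : ℝ) : Prop where
  pos : 0 < R₀
  nonneg : 0 ≤ K
  re_add_half_le : ∀ z : ℂ, R₀ ≤ z.re → z.re + 1 / 2 ≤ (f z).re
  norm_defect_le : ∀ z : ℂ, R₀ ≤ z.re → ‖L (f z) - L z - 1‖ ≤ K / z.re ^ 2

theorem summable_div_add_half_mul_sq (K R₀ : ℝ) :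
    Summable fun k : ℕ => K / (R₀ + k / 2) ^ 2 := by
  have := ((Real.summable_one_div_nat_add_rpow (2 * R₀) 2).2 one_lt_two).mul_left (4 * K)
  refine this.congr fun k => ?_
  rw [Real.rpow_two, sq_abs, show R₀ + k / 2 = (k + 2 * R₀) / 2 by ring, div_pow,
    div_div_eq_mul_div]
  ring

namespace IsApproxFatouCoord

variable {f L : ℂ → ℂ} {R₀ K : ℝ} (h : IsApproxFatouCoord f L R₀ K)
include h

theorem re_add_le_re_iterate (k : ℕ) {z : ℂ} (hz : R₀ ≤ z.re) :
    z.re + k / 2 ≤ (f^[k] z).re := by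
  induction k with
  | zero => simp
  | succ k ih =>
    rw [Function.iterate_succ_apply']
    have := h.re_add_half_le _ (hz.trans (by linarith [(k.cast_nonneg : (0 : ℝ) ≤ k)]))
    push_cast
    linarith

theorem norm_defect_iterate_le (k : ℕ) {z : ℂ} (hz : R₀ ≤ z.re) :
    ‖L (f (f^[k] z)) - L (f^[k] z) - 1‖ ≤ K / (R₀ + k / 2) ^ 2 := by
  have hk := h.re_add_le_re_iterate k hz
  have hpos : 0 < R₀ + k / 2 := by have := h.pos; positivity
  have hk0 : (0 : ℝ) ≤ k := k.cast_nonneg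
  calc _ ≤ K / (f^[k] z).re ^ 2 := h.norm_defect_le _ (by linarith)
    _ ≤ K / (R₀ + k / 2) ^ 2 := by gcongr; exacts [h.nonneg, by linarith]

theorem fatouCoord_apply {z : ℂ} (hz : R₀ ≤ z.re) :
    fatouCoord f L (f z) = fatouCoord f L z + 1 := by
  have hsum : Summable fun k : ℕ => L (f (f^[k] z)) - L (f^[k] z) - 1 :=
    (summable_div_add_half_mul_sq K R₀).of_norm_bounded fun k => h.norm_defect_iterate_le k hz
  simp only [fatouCoord, hsum.tsum_eq_zero_add, ← Function.iterate_succ_apply]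
  simp only [Function.iterate_succ_apply, Function.iterate_zero_apply]
  ring

theorem differentiableOn_fatouCoord (hf : DifferentiableOn ℂ f {z : ℂ | R₀ < z.re})
    (hL : DifferentiableOn ℂ L {z : ℂ | R₀ < z.re}) :
    DifferentiableOn ℂ (fatouCoord f L) {z : ℂ | R₀ < z.re} := by
  have hmaps : MapsTo f {z : ℂ | R₀ < z.re} {z : ℂ | R₀ < z.re} := fun z (hz : R₀ < z.re) =>
    show R₀ < (f z).re by linarith [h.re_add_half_le z hz.le]
  have hLf : ∀ k : ℕ, DifferentiableOn ℂ (fun z => L (f^[k] z)) {z : ℂ | R₀ < z.re} :=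
    fun k => hL.comp (hf.iterate hmaps k) (hmaps.iterate k)
  refine hL.add (differentiableOn_tsum_of_summable_norm (summable_div_add_half_mul_sq K R₀)
    (fun k => ?_) (isOpen_lt continuous_const continuous_re)
    fun k z hz => h.norm_defect_iterate_le k (le_of_lt hz))
  simpa only [Function.iterate_succ_apply'] using
    ((hLf (k + 1)).fun_sub (hLf k)).fun_sub (differentiableOn_const 1)

theorem norm_fatouCoord_sub_le {z : ℂ} (hz : R₀ ≤ z.re) :
    ‖fatouCoord f L z - L z‖ ≤ ∑' k : ℕ, K / (R₀ + k / 2) ^ 2 := by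
  rw [fatouCoord, add_sub_cancel_left]
  exact tsum_of_norm_bounded (summable_div_add_half_mul_sq K R₀).hasSum
    fun k => h.norm_defect_iterate_le k hz

end IsApproxFatouCoord

theorem isLittleO_log_cobounded : log =o[cobounded ℂ] id := by
  have hsmall : (fun z : ℂ => Real.log ‖z‖ + Real.pi) =o[cobounded ℂ] (‖·‖) :=
    (Real.isLittleO_log_id_atTop.add (isLittleO_const_id_atTop Real.pi)).comp_tendsto
      tendsto_norm_cobounded_atTop
  refine (IsBigO.of_bound 1 ?_).trans_isLittleO (isLittleO_norm_right.1 hsmall)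
  filter_upwards [eventually_cobounded_le_norm 1] with z hz
  have hlog := Real.log_nonneg hz
  rw [one_mul, Real.norm_eq_abs, abs_of_nonneg (by positivity)]
  calc ‖log z‖ ≤ |(log z).re| + |(log z).im| := norm_le_abs_re_add_abs_im _
    _ ≤ Real.log ‖z‖ + Real.pi := by
      rw [log_re, log_im, abs_of_nonneg hlog]
      gcongr
      exact abs_arg_le_pi z

theorem comap_re_atTop_le_cobounded : comap re atTop ≤ cobounded ℂ := by
  rw [← tendsto_id', ← tendsto_norm_atTop_iff_cobounded]
  exact tendsto_atTop_mono re_le_norm tendsto_comap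

theorem IsApproxFatouCoord.tendsto_fatouCoord_div_self {f : ℂ → ℂ} {a : ℂ} {R₀ K : ℝ}
    (h : IsApproxFatouCoord f (fun w => w - a * log w) R₀ K) :
    Tendsto (fun z => fatouCoord f (fun w => w - a * log w) z / z) (comap re atTop) (𝓝 1) := by
  set u := fatouCoord f fun w => w - a * log w
  have hright : ∀ᶠ z : ℂ in comap re atTop, R₀ ≤ z.re :=
    tendsto_comap.eventually (eventually_ge_atTop R₀)
  have hbdd : (fun z => u z - (z - a * log z)) =O[comap re atTop] fun _ => (1 : ℂ) :=
    IsBigO.of_bound (∑' k : ℕ, K / (R₀ + k / 2) ^ 2) <| hright.mono fun z hz => by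
      simpa using h.norm_fatouCoord_sub_le hz
  have hsmall : (fun z => u z - z) =o[comap re atTop] id := by
    have hlog := (isLittleO_log_cobounded.const_mul_left a).mono comap_re_atTop_le_cobounded
    have hone := (isLittleO_const_id_cobounded (1 : ℂ)).mono comap_re_atTop_le_cobounded
    exact ((hbdd.trans_isLittleO hone).sub hlog).congr_left fun z => by ring
  have hlim := hsmall.tendsto_div_nhds_zero.const_add 1
  rw [add_zero] at hlim
  refine hlim.congr' ?_
  filter_upwards [hright] with z hz
  have hz0 : z ≠ 0 := fun h0 => by simp [h0] at hz; linarith [h.pos]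
  simp only [id_eq]
  field_simp
  ring

theorem exists_isApproxFatouCoord_sub_mul_log {f : ℂ → ℂ} {R M : ℝ} (hR : 0 < R) (hM : 0 < M)
    (hol : DifferentiableOn ℂ f {z : ℂ | R ≤ ‖z‖})
    (hbound : ∀ z : ℂ, R ≤ ‖z‖ → ‖f z - (z + 1)‖ ≤ M / ‖z‖) :
    ∃ a : ℂ, ∃ K : ℝ, IsApproxFatouCoord f (fun w => w - a * log w) (2 * R + 2 * M) K := by
  have hg : ∀ z : ℂ, R < ‖z‖ → ‖z * (f z - z - 1)‖ ≤ M := fun z hz => by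
    rw [norm_mul, sub_sub, ← le_div_iff₀' (hR.trans hz)]
    exact hbound z hz.le
  obtain ⟨a, C, hC, ha⟩ := exists_norm_sub_le_div_norm_of_bounded hR
    ((differentiableOn_id.fun_mul ((hol.fun_sub differentiableOn_id).fun_sub
      (differentiableOn_const 1))).mono fun z (hz : R < ‖z‖) => show R ≤ ‖z‖ from hz.le) hg
  have hnorm : ∀ z : ℂ, 2 * R + 2 * M ≤ z.re → 2 * R + 2 * M ≤ ‖z‖ :=
    fun z hz => hz.trans (re_le_norm z)
  have hnear : ∀ z : ℂ, 2 * R + 2 * M ≤ z.re → ‖f z - (z + 1)‖ ≤ 1 / 2 := fun z hz => by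
    have := hnorm z hz
    refine (hbound z (by linarith)).trans ?_
    rw [div_le_iff₀ (by linarith)]
    linarith
  refine ⟨a, C + ‖a‖ * M + 9 / 4 * ‖a‖, by positivity, by positivity,
    fun z hz => re_add_half_le_re_of_norm_sub_add_one_le (hnear z hz), fun z hz => ?_⟩
  have := hnorm z hz
  exact norm_sub_mul_log_defect_le hC hM.le (by linarith) (ha z (by linarith))
    (hbound z (by linarith)) (hnear z hz)

/-- Existence of a Fatou coordinate with the asymptotics `u(z) = z(1 + o(1))` as
`Re z → ∞` (Lemma on `u_0` in Appendix A.3): if `f` is holomorphic on `{|z| ≥ R}` with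
`|f(z) − (z+1)| ≤ M/|z|` there, then a right half-plane `E_{R'} = {Re z ≥ R'}` is mapped
into itself by `f`, and there is a holomorphic `u` on `E_{R'}` with `u(f(z)) = u(z) + 1`
and `u(z)/z → 1` as `Re z → ∞`. -/
theorem fatou_coordinate_asymptotics
    (R M : ℝ) (hR : 0 < R) (hM : 0 < M) (f : ℂ → ℂ)
    (hol : DifferentiableOn ℂ f {z : ℂ | R ≤ ‖z‖})
    (hbound : ∀ z : ℂ, R ≤ ‖z‖ → ‖f z - (z + 1)‖ ≤ M / ‖z‖) :
    ∃ R' : ℝ, R ≤ R' ∧ ∃ u : ℂ → ℂ,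
      MapsTo f {z : ℂ | R' ≤ z.re} {z : ℂ | R' ≤ z.re} ∧
      DifferentiableOn ℂ u {z : ℂ | R' ≤ z.re} ∧
      (∀ z : ℂ, R' ≤ z.re → u (f z) = u z + 1) ∧
      (∀ δ : ℝ, 0 < δ → ∃ ρ : ℝ, R' ≤ ρ ∧
        ∀ z : ℂ, R' ≤ z.re → ρ ≤ z.re → ‖u z / z - 1‖ ≤ δ) := by
  obtain ⟨a, K, h⟩ := exists_isApproxFatouCoord_sub_mul_log hR hM hol hbound
  set R₀ := 2 * R + 2 * M
  have hf : DifferentiableOn ℂ f {z : ℂ | R₀ < z.re} :=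
    hol.mono fun z (hz : R₀ < z.re) => show R ≤ ‖z‖ by linarith [re_le_norm z]
  have hL : DifferentiableOn ℂ (fun w => w - a * log w) {z : ℂ | R₀ < z.re} := fun z hz =>
    (differentiableAt_id.fun_sub ((differentiableAt_log
      (Or.inl (h.pos.trans hz))).const_mul a)).differentiableWithinAt
  have hmaps : MapsTo f {z : ℂ | R₀ + 1 ≤ z.re} {z : ℂ | R₀ + 1 ≤ z.re} :=
    fun z (hz : R₀ + 1 ≤ z.re) => show R₀ + 1 ≤ (f z).re by
      linarith [h.re_add_half_le z (by linarith)]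
  refine ⟨R₀ + 1, by linarith, fatouCoord f fun w => w - a * log w, hmaps,
    (h.differentiableOn_fatouCoord hf hL).mono fun z (hz : R₀ + 1 ≤ z.re) =>
      show R₀ < z.re by linarith,
    fun z hz => h.fatouCoord_apply (by linarith), fun δ hδ => ?_⟩
  obtain ⟨ρ, hρ⟩ := eventually_atTop.1 <| eventually_comap.1 <|
    h.tendsto_fatouCoord_div_self.eventually (closedBall_mem_nhds 1 hδ)
  exact ⟨max (R₀ + 1) ρ, le_max_left _ _, fun z _ hz => by
    simpa [dist_eq_norm] using hρ z.re (le_of_max_le_right hz) z rfl⟩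
end

section
/- Let q ≥ 1 be an integer, λ ∈ ℂ ∖ {0}, and let f be holomorphic on a neighborhood of 0 with the property that there is a constant K with |f(z) − (λz + z^{q+1})| ≤ K|z|^{2q+1} for all z in that neighborhood. Define the sequence (C_n) by C_0 = 0 and C_{n+1} = λ^{q+1} C_n + λ^n. Then for every n ≥ 0 there exist δ_n > 0 and K_n > 0 such that the n-th iterate f^{∘n} is defined on {|z| < δ_n} and satisfies |f^{∘n}(z) − (λ^n z + C_n z^{q+1})| ≤ K_n |z|^{2q+1} for all |z| < δ_n. -/
open Complex Set Metric Filter Topology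

lemma norm_pow_sub_pow_aux (a b : ℂ) (M : ℝ) (ha : ‖a‖ ≤ M) (hb : ‖b‖ ≤ M) :
    ∀ m : ℕ, ‖a ^ (m + 1) - b ^ (m + 1)‖ ≤ (m + 1) * M ^ m * ‖a - b‖ := by
  have hM : 0 ≤ M := le_trans (norm_nonneg a) ha
  intro m
  induction m with
  | zero => simp
  | succ m ih =>
    have key : a ^ (m + 2) - b ^ (m + 2)
        = a ^ (m + 1) * (a - b) + (a ^ (m + 1) - b ^ (m + 1)) * b := by ring
    calc ‖a ^ (m + 2) - b ^ (m + 2)‖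
        ≤ ‖a ^ (m + 1) * (a - b)‖ + ‖(a ^ (m + 1) - b ^ (m + 1)) * b‖ := by
          rw [key]; exact norm_add_le _ _
      _ ≤ M ^ (m + 1) * ‖a - b‖ + ((m + 1) * M ^ m * ‖a - b‖) * M := by
          gcongr ?_ + ?_
          · rw [norm_mul, norm_pow]
            gcongr
          · rw [norm_mul]
            exact mul_le_mul ih hb (norm_nonneg b) (by positivity)
      _ = ((m : ℝ) + 1 + 1) * M ^ (m + 1) * ‖a - b‖ := by ring
      _ = ((m + 1 : ℕ) + 1) * M ^ (m + 1) * ‖a - b‖ := by push_cast; ring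

/-- For a germ in normal form `f(z) = λz + z^{q+1} + O(z^{2q+1})`, the `n`-th iterate
satisfies `f^{∘n}(z) = λ^n z + C_n z^{q+1} + O(z^{2q+1})`, where `C_0 = 0` and
`C_{n+1} = λ^{q+1} C_n + λ^n` (claim following the Proposition of Appendix A.2). -/
theorem iterate_normal_form_coefficients
    (q : ℕ) (hq : 1 ≤ q) (lam : ℂ) (hlam : lam ≠ 0)
    (r : ℝ) (hr : 0 < r) (f : ℂ → ℂ) (K : ℝ)
    (hol : DifferentiableOn ℂ f (ball (0:ℂ) r))
    (hbound : ∀ z ∈ ball (0:ℂ) r,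
      ‖f z - (lam * z + z ^ (q + 1))‖ ≤ K * ‖z‖ ^ (2 * q + 1))
    (C : ℕ → ℂ) (hC0 : C 0 = 0)
    (hCrec : ∀ n : ℕ, C (n + 1) = lam ^ (q + 1) * C n + lam ^ n) :
    ∀ n : ℕ, ∃ δ : ℝ, 0 < δ ∧ ∃ Kn : ℝ, 0 < Kn ∧
      ∀ z ∈ ball (0:ℂ) δ,
        (∀ k < n, f^[k] z ∈ ball (0:ℂ) r) ∧
        ‖f^[n] z - (lam ^ n * z + C n * z ^ (q + 1))‖ ≤ Kn * ‖z‖ ^ (2 * q + 1) := by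
  -- growth constant
  set A : ℝ := ‖lam‖ + 1 + |K| with hA
  have hA1 : 1 ≤ A := by rw [hA]; have := norm_nonneg lam; have := abs_nonneg K; linarith
  have hA0 : 0 < A := lt_of_lt_of_le one_pos hA1
  -- basic growth estimate
  have hgrow : ∀ z : ℂ, z ∈ ball (0:ℂ) r → ‖z‖ ≤ 1 → ‖f z‖ ≤ A * ‖z‖ := by
    intro z hz hz1
    have hz0 : 0 ≤ ‖z‖ := norm_nonneg z
    have h1 : ‖z‖ ^ (q + 1) ≤ ‖z‖ := by
      calc ‖z‖ ^ (q + 1) ≤ ‖z‖ ^ 1 := pow_le_pow_of_le_one hz0 hz1 (by omega)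
        _ = ‖z‖ := pow_one _
    have h2 : ‖z‖ ^ (2 * q + 1) ≤ ‖z‖ := by
      calc ‖z‖ ^ (2 * q + 1) ≤ ‖z‖ ^ 1 := pow_le_pow_of_le_one hz0 hz1 (by omega)
        _ = ‖z‖ := pow_one _
    have hb := hbound z hz
    have hKabs : K * ‖z‖ ^ (2 * q + 1) ≤ |K| * ‖z‖ := by
      calc K * ‖z‖ ^ (2 * q + 1) ≤ |K| * ‖z‖ ^ (2 * q + 1) := by
            gcongr; exact le_abs_self K
        _ ≤ |K| * ‖z‖ := by gcongr
    calc ‖f z‖ = ‖(f z - (lam * z + z ^ (q + 1))) + (lam * z + z ^ (q + 1))‖ := by ring_nf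
      _ ≤ ‖f z - (lam * z + z ^ (q + 1))‖ + (‖lam * z‖ + ‖z ^ (q + 1)‖) :=
          le_trans (norm_add_le _ _) (by gcongr; exact norm_add_le _ _)
      _ ≤ |K| * ‖z‖ + (‖lam‖ * ‖z‖ + ‖z‖) := by
          rw [norm_mul, norm_pow]
          gcongr
          exact le_trans hb hKabs
      _ = A * ‖z‖ := by rw [hA]; ring
  intro n
  induction n with
  | zero =>
    refine ⟨r, hr, 1, one_pos, fun z hz => ⟨fun k hk => absurd hk (Nat.not_lt_zero k), ?_⟩⟩
    simp [hC0]
  | succ n ih =>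
    obtain ⟨δn, hδn, Kn, hKn, IH⟩ := ih
    refine ⟨min (min r 1) (δn / A), by positivity,
      Kn * A ^ (2 * q + 1) + ‖lam‖ ^ n * |K| + ‖C n‖ * (q + 1) * A ^ q * (|K| + 1) + 1,
      by positivity, fun z hz => ?_⟩
    rw [mem_ball_zero_iff] at hz
    have hzr : ‖z‖ < r := lt_of_lt_of_le hz (le_trans (min_le_left _ _) (min_le_left _ _))
    have hz1 : ‖z‖ ≤ 1 := le_of_lt (lt_of_lt_of_le hz (le_trans (min_le_left _ _) (min_le_right _ _)))
    have hzr' : z ∈ ball (0:ℂ) r := mem_ball_zero_iff.mpr hzr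
    have hz0 : 0 ≤ ‖z‖ := norm_nonneg z
    have hfzA : ‖f z‖ ≤ A * ‖z‖ := hgrow z hzr' hz1
    have hfzδ : f z ∈ ball (0:ℂ) δn := by
      rw [mem_ball_zero_iff]
      calc ‖f z‖ ≤ A * ‖z‖ := hfzA
        _ < A * (δn / A) := by
            gcongr
            exact lt_of_lt_of_le hz (min_le_right _ _)
        _ = δn := by field_simp
    obtain ⟨hmem, hmain⟩ := IH (f z) hfzδ
    constructor
    · intro k hk
      match k with
      | 0 => simpa using hzr'
      | j + 1 =>
        rw [Function.iterate_succ_apply]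
        exact hmem j (by omega)
    · rw [Function.iterate_succ_apply]
      set w : ℂ := f z with hw
      have hE : ‖w - (lam * z + z ^ (q + 1))‖ ≤ K * ‖z‖ ^ (2 * q + 1) := hbound z hzr'
      have hEabs : ‖w - (lam * z + z ^ (q + 1))‖ ≤ |K| * ‖z‖ ^ (2 * q + 1) := by
        refine le_trans hE ?_
        gcongr; exact le_abs_self K
      have hwA : ‖w‖ ≤ A * ‖z‖ := hfzA
      have hlzA : ‖lam * z‖ ≤ A * ‖z‖ := by
        rw [norm_mul]
        gcongr
        rw [hA]
        have := abs_nonneg K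
        linarith
    -- key identity
      have key : f^[n] w - (lam ^ (n + 1) * z + C (n + 1) * z ^ (q + 1))
          = (f^[n] w - (lam ^ n * w + C n * w ^ (q + 1)))
            + lam ^ n * (w - (lam * z + z ^ (q + 1)))
            + C n * (w ^ (q + 1) - (lam * z) ^ (q + 1)) := by
        rw [hCrec]; ring
      -- bound for w^(q+1) - (lam z)^(q+1)
      have hwlz : ‖w - lam * z‖ ≤ (|K| + 1) * ‖z‖ ^ (q + 1) := by
        have h2q : ‖z‖ ^ (2 * q + 1) ≤ ‖z‖ ^ (q + 1) :=
          pow_le_pow_of_le_one hz0 hz1 (by omega)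
        calc ‖w - lam * z‖ = ‖(w - (lam * z + z ^ (q + 1))) + z ^ (q + 1)‖ := by ring_nf
          _ ≤ ‖w - (lam * z + z ^ (q + 1))‖ + ‖z ^ (q + 1)‖ := norm_add_le _ _
          _ ≤ |K| * ‖z‖ ^ (2 * q + 1) + ‖z‖ ^ (q + 1) := by
              rw [norm_pow]; gcongr
          _ ≤ |K| * ‖z‖ ^ (q + 1) + ‖z‖ ^ (q + 1) := by
              gcongr
          _ = (|K| + 1) * ‖z‖ ^ (q + 1) := by ring
      have hpow : ‖w ^ (q + 1) - (lam * z) ^ (q + 1)‖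
          ≤ (q + 1) * (A * ‖z‖) ^ q * ((|K| + 1) * ‖z‖ ^ (q + 1)) := by
        calc ‖w ^ (q + 1) - (lam * z) ^ (q + 1)‖
            ≤ (q + 1) * (A * ‖z‖) ^ q * ‖w - lam * z‖ :=
              norm_pow_sub_pow_aux w (lam * z) (A * ‖z‖) hwA hlzA q
          _ ≤ (q + 1) * (A * ‖z‖) ^ q * ((|K| + 1) * ‖z‖ ^ (q + 1)) := by
              gcongr
      have hwpow : ‖w‖ ^ (2 * q + 1) ≤ A ^ (2 * q + 1) * ‖z‖ ^ (2 * q + 1) := by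
        calc ‖w‖ ^ (2 * q + 1) ≤ (A * ‖z‖) ^ (2 * q + 1) :=
            pow_le_pow_left₀ (norm_nonneg w) hwA _
          _ = A ^ (2 * q + 1) * ‖z‖ ^ (2 * q + 1) := mul_pow _ _ _
      calc ‖f^[n] w - (lam ^ (n + 1) * z + C (n + 1) * z ^ (q + 1))‖
          ≤ ‖f^[n] w - (lam ^ n * w + C n * w ^ (q + 1))‖
            + ‖lam ^ n * (w - (lam * z + z ^ (q + 1)))‖
            + ‖C n * (w ^ (q + 1) - (lam * z) ^ (q + 1))‖ := by
            rw [key]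
            exact le_trans (norm_add_le _ _) (by gcongr; exact norm_add_le _ _)
        _ ≤ Kn * (A ^ (2 * q + 1) * ‖z‖ ^ (2 * q + 1))
            + ‖lam‖ ^ n * (|K| * ‖z‖ ^ (2 * q + 1))
            + ‖C n‖ * ((q + 1) * (A * ‖z‖) ^ q * ((|K| + 1) * ‖z‖ ^ (q + 1))) := by
            gcongr ?_ + ?_ + ?_
            · exact le_trans hmain (by gcongr)
            · rw [norm_mul, norm_pow]
              gcongr
            · rw [norm_mul]
              gcongr
        _ = (Kn * A ^ (2 * q + 1) + ‖lam‖ ^ n * |K|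
              + ‖C n‖ * (q + 1) * A ^ q * (|K| + 1)) * ‖z‖ ^ (2 * q + 1) := by
            rw [mul_pow]
            ring
        _ ≤ (Kn * A ^ (2 * q + 1) + ‖lam‖ ^ n * |K|
              + ‖C n‖ * (q + 1) * A ^ q * (|K| + 1) + 1) * ‖z‖ ^ (2 * q + 1) := by
            have hzp := pow_nonneg hz0 (2 * q + 1)
            nlinarith
end

section
/- Let q ≥ 1 be an integer, Λ ∈ ℂ ∖ {0}, and let f be holomorphic on a neighborhood U of 0 such that there is a constant C₀ with |f(z) − Λz(1 + z^q)| ≤ C₀|z|^{2q+1} for all z ∈ U. Define Ψ(z) = −Λ^q/(q z^q) for z ≠ 0. Then there exist δ > 0 and M > 0 such that for every z with 0 < |z| < δ one has f(z) ≠ 0 and |Ψ(f(z)) − (Λ^{-q} Ψ(z) + 1)| ≤ M/|Ψ(z)|. -/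
/-!
Write `f z = Λ z ρ(z)`, so that `ρ = 1 + z^q + O(z^{2q})`. Then `Ψ (f z) = Λ^{-q} Ψ(z) ρ^{-q}` and
`Λ^{-q} Ψ(z) = -1/(q z^q)`, while the first-order expansions of `x ↦ x⁻¹` and `x ↦ x^q` at `1`
give `ρ^{-q} = 1 - q z^q + O(z^{2q})`. Hence `Ψ (f z) - Λ^{-q} Ψ(z) - 1 = O(z^q)`, and `|z|^q` is a
constant multiple of `1/|Ψ(z)|`.
-/

open Metric Filter Topology Asymptotics

namespace Asymptotics

variable {α 𝕜 : Type*} [NormedField 𝕜] {l : Filter α} {ρ w : α → 𝕜}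

theorem IsBigO.tendsto_one_of_sub_one_add (hw : Tendsto w l (𝓝 0))
    (h : (fun x => ρ x - (1 + w x)) =O[l] fun x => w x ^ 2) : Tendsto ρ l (𝓝 1) := by
  have hrem : Tendsto (fun x => ρ x - (1 + w x)) l (𝓝 0) :=
    h.trans_tendsto (by simpa using hw.pow 2)
  simpa using hrem.add ((tendsto_const_nhds (x := (1 : 𝕜))).add hw)

theorem IsBigO.pow_sub_one_add_mul (hw : Tendsto w l (𝓝 0))
    (h : (fun x => ρ x - (1 + w x)) =O[l] fun x => w x ^ 2) (n : ℕ) :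
    (fun x => ρ x ^ n - (1 + n * w x)) =O[l] fun x => w x ^ 2 := by
  induction n with
  | zero => simpa using isBigO_zero (fun x => w x ^ 2) l
  | succ n ih =>
    have hρ : ρ =O[l] fun _ => (1 : 𝕜) := (h.tendsto_one_of_sub_one_add hw).isBigO_one 𝕜
    have hlin : (fun x => 1 + n * w x) =O[l] fun _ => (1 : 𝕜) := by
      refine Tendsto.isBigO_one 𝕜 (c := (1 : 𝕜)) ?_
      simpa using (tendsto_const_nhds (x := (1 : 𝕜))).add (hw.const_mul (n : 𝕜))
    have hsq : (fun x => (n : 𝕜) * w x ^ 2) =O[l] fun x => w x ^ 2 :=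
      isBigO_const_mul_self _ _ _
    have h₁ := ih.mul hρ
    have h₂ := hlin.mul h
    simp only [mul_one, one_mul] at h₁ h₂
    refine ((h₁.add h₂).add hsq).congr_left (fun x => ?_)
    push_cast; ring

theorem IsBigO.inv_sub_one_sub (hw : Tendsto w l (𝓝 0))
    (h : (fun x => ρ x - (1 + w x)) =O[l] fun x => w x ^ 2) :
    (fun x => (ρ x)⁻¹ - (1 - w x)) =O[l] fun x => w x ^ 2 := by
  have hρ := h.tendsto_one_of_sub_one_add hw
  have hρinv : (fun x => (ρ x)⁻¹) =O[l] fun _ => (1 : 𝕜) :=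
    (hρ.inv₀ one_ne_zero).isBigO_one 𝕜
  have hnum : (fun x => -(ρ x - (1 + w x)) + w x * (ρ x - (1 + w x)) + w x ^ 2) =O[l]
      fun x => w x ^ 2 := by
    have hwh := (hw.isBigO_one 𝕜).mul h
    simp only [one_mul] at hwh
    exact (h.neg_left.add hwh).add (isBigO_refl _ _)
  refine (hρinv.mul hnum).congr' ?_ (Eventually.of_forall fun x => one_mul _)
  filter_upwards [hρ.eventually_ne one_ne_zero] with x hx
  field_simp
  ring

theorem IsBigO.inv_pow_sub_one_sub_mul (hw : Tendsto w l (𝓝 0))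
    (h : (fun x => ρ x - (1 + w x)) =O[l] fun x => w x ^ 2) (n : ℕ) :
    (fun x => (ρ x)⁻¹ ^ n - (1 - n * w x)) =O[l] fun x => w x ^ 2 := by
  have hinv : (fun x => (ρ x)⁻¹ - (1 + -w x)) =O[l] fun x => (-w x) ^ 2 := by
    simpa [sub_eq_add_neg] using h.inv_sub_one_sub hw
  simpa [sub_eq_add_neg] using hinv.pow_sub_one_add_mul (by simpa using hw.neg) n

end Asymptotics

theorem isBigO_div_mul_sub_one_add_pow {𝕜 : Type*} [NormedField 𝕜] {f : 𝕜 → 𝕜} {Λ : 𝕜}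
    (hΛ : Λ ≠ 0) {q : ℕ} {C₀ : ℝ} {s : Set 𝕜} (hs : s ∈ 𝓝 0)
    (hbound : ∀ z ∈ s, ‖f z - Λ * z * (1 + z ^ q)‖ ≤ C₀ * ‖z‖ ^ (2 * q + 1)) :
    (fun z => f z / (Λ * z) - (1 + z ^ q)) =O[𝓝[≠] 0] fun z => (z ^ q) ^ 2 := by
  refine IsBigO.of_bound (C₀ / ‖Λ‖) ?_
  filter_upwards [self_mem_nhdsWithin, nhdsWithin_le_nhds hs] with z (hz : z ≠ 0) hzs
  have hΛz : Λ * z ≠ 0 := mul_ne_zero hΛ hz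
  have hdiv : f z / (Λ * z) - (1 + z ^ q) = (f z - Λ * z * (1 + z ^ q)) / (Λ * z) := by
    field_simp
  rw [hdiv, norm_div, div_le_iff₀ (norm_pos_iff.2 hΛz)]
  calc ‖f z - Λ * z * (1 + z ^ q)‖ ≤ C₀ * ‖z‖ ^ (2 * q + 1) := hbound z hzs
    _ = C₀ / ‖Λ‖ * ‖(z ^ q) ^ 2‖ * ‖Λ * z‖ := by
      rw [norm_mul, norm_pow, norm_pow]
      field_simp [norm_ne_zero_iff.2 hΛ]
      ring

/-- Since `(Ψ z)⁻¹ = -q z^q / Λ^q`, the right-hand side is `-(ρ^{-q} - (1 - q z^q)) / (q z^q)`. -/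
theorem branched_coordinate_sub_eq {K : Type*} [Field K] {q : ℕ} (hq : (q : K) ≠ 0) {Λ z ρ : K}
    (hΛ : Λ ≠ 0) (hz : z ≠ 0) (hρ : ρ ≠ 0) (Ψ : K → K)
    (hΨ : ∀ z : K, Ψ z = -(Λ ^ q) / ((q : K) * z ^ q)) :
    Ψ (Λ * z * ρ) - ((Λ ^ q)⁻¹ * Ψ z + 1) =
      (ρ⁻¹ ^ q - (1 - q * z ^ q)) * (Λ ^ q / q ^ 2 * (Ψ z)⁻¹ / (z ^ q) ^ 2) := by
  simp only [hΨ, inv_pow]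
  field_simp
  ring

theorem branched_coordinate_near_translation_general
    (q : ℕ) (hq : 1 ≤ q) (Λ : ℂ) (hΛ : Λ ≠ 0)
    (r : ℝ) (hr : 0 < r) (f : ℂ → ℂ) (C₀ : ℝ)
    (hbound : ∀ z ∈ ball (0:ℂ) r,
      ‖f z - Λ * z * (1 + z ^ q)‖ ≤ C₀ * ‖z‖ ^ (2 * q + 1))
    (Ψ : ℂ → ℂ) (hΨ : ∀ z : ℂ, Ψ z = -(Λ ^ q) / ((q : ℂ) * z ^ q)) :
    ∃ δ : ℝ, 0 < δ ∧ δ ≤ r ∧ ∃ M : ℝ, 0 < M ∧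
      ∀ z : ℂ, 0 < ‖z‖ → ‖z‖ < δ →
        f z ≠ 0 ∧ ‖Ψ (f z) - ((Λ ^ q)⁻¹ * Ψ z + 1)‖ ≤ M / ‖Ψ z‖ := by
  set l := 𝓝[≠] (0 : ℂ)
  have hq0 : (q : ℂ) ≠ 0 := Nat.cast_ne_zero.2 (by omega)
  have hw : Tendsto (fun z : ℂ => z ^ q) l (𝓝 0) := by
    simpa [zero_pow (by omega : q ≠ 0)] using
      ((continuous_pow q).tendsto (0 : ℂ)).mono_left nhdsWithin_le_nhds
  have hρ := isBigO_div_mul_sub_one_add_pow hΛ (ball_mem_nhds 0 hr) hbound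
  have hρne : ∀ᶠ z in l, z ≠ 0 ∧ f z / (Λ * z) ≠ 0 :=
    eventually_mem_nhdsWithin.and ((hρ.tendsto_one_of_sub_one_add hw).eventually_ne one_ne_zero)
  have hD : (fun z => Ψ (f z) - ((Λ ^ q)⁻¹ * Ψ z + 1)) =O[l] fun z => (Ψ z)⁻¹ := by
    refine ((hρ.inv_pow_sub_one_sub_mul hw q).mul
      (isBigO_refl (fun z => Λ ^ q / q ^ 2 * (Ψ z)⁻¹ / (z ^ q) ^ 2) l)).congr' ?_ ?_
      |>.trans (isBigO_const_mul_self (Λ ^ q / q ^ 2) _ _)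
    · filter_upwards [hρne] with z ⟨hz, hρz⟩
      rw [← branched_coordinate_sub_eq hq0 hΛ hz hρz Ψ hΨ, mul_div_cancel₀ _ (mul_ne_zero hΛ hz)]
    · filter_upwards [self_mem_nhdsWithin] with z (hz : z ≠ 0)
      field_simp
  obtain ⟨M, hM, hMD⟩ := hD.exists_pos
  obtain ⟨ε, hε, hεP⟩ :=
    Metric.eventually_nhds_iff.1 (eventually_nhdsWithin_iff.1 (hρne.and hMD.bound))
  refine ⟨min ε r, lt_min hε hr, min_le_right _ _, M, hM, fun z hz0 hzδ => ?_⟩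
  obtain ⟨⟨hz, hρz⟩, hzD⟩ :=
    hεP (by simpa using hzδ.trans_le (min_le_left _ _)) (norm_pos_iff.1 hz0)
  refine ⟨?_, by simpa [div_eq_mul_inv] using hzD⟩
  rw [← mul_div_cancel₀ (f z) (mul_ne_zero hΛ hz)]
  exact mul_ne_zero (mul_ne_zero hΛ hz) hρz

/-- The branched change of coordinates `w = Ψ(z) = −Λ^q/(q z^q)` of Appendix A.2 converts
the normal form `f(z) = Λz(1 + z^q) + O(z^{2q+1})` near the fixed point `0` into the
near-translation `w ↦ Λ^{−q} w + 1 + O(1/w)` near infinity. -/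
theorem branched_coordinate_near_translation
    (q : ℕ) (hq : 1 ≤ q) (Λ : ℂ) (hΛ : Λ ≠ 0)
    (r : ℝ) (hr : 0 < r) (f : ℂ → ℂ) (C₀ : ℝ)
    (hol : DifferentiableOn ℂ f (ball (0:ℂ) r))
    (hbound : ∀ z ∈ ball (0:ℂ) r,
      ‖f z - Λ * z * (1 + z ^ q)‖ ≤ C₀ * ‖z‖ ^ (2 * q + 1))
    (Ψ : ℂ → ℂ) (hΨ : ∀ z : ℂ, Ψ z = -(Λ ^ q) / ((q : ℂ) * z ^ q)) :
    ∃ δ : ℝ, 0 < δ ∧ δ ≤ r ∧ ∃ M : ℝ, 0 < M ∧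
      ∀ z : ℂ, 0 < ‖z‖ → ‖z‖ < δ →
        f z ≠ 0 ∧ ‖Ψ (f z) - ((Λ ^ q)⁻¹ * Ψ z + 1)‖ ≤ M / ‖Ψ z‖ :=
  branched_coordinate_near_translation_general q hq Λ hΛ r hr f C₀ hbound Ψ hΨ
end

section
/- Under these hypotheses, with D_ε = {z ∈ ℂ : |z|^q ≤ ε/2}, there exists ε₀ > 0 such that for every ε ∈ (0, ε₀): D_ε ⊆ U, |f_ε(z)| < |z| for every z ∈ D_ε ∖ {0}, and f_ε(D_ε) is contained in the interior of D_ε. -/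
open Complex Set Metric Filter Topology

/-- First step of the proof of the lemma on small invariant paths (Appendix A.4):
for the family `f_ε(z) = (1−ε) z (1 + z^q) + O(z^{2q+1})` on `U = B(0,ρ₀)` and small
`ε > 0`, the disk `D_ε = {|z|^q ≤ ε/2}` is contained in `U`, every nonzero `z ∈ D_ε`
satisfies `|f_ε(z)| < |z|`, and `f_ε(D_ε)` lies in the interior of `D_ε`. -/
theorem central_disk_invariance
    (q : ℕ) (hq : 1 ≤ q) (ρ₀ : ℝ) (hρ₀ : 0 < ρ₀)
    (f : ℝ → ℂ → ℂ) (C₀ : ℝ) (hC₀ : 0 < C₀)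
    (hol : ∀ ε ∈ Ioo (0:ℝ) 1, DifferentiableOn ℂ (f ε) (ball (0:ℂ) ρ₀))
    (hbound : ∀ ε ∈ Ioo (0:ℝ) 1, ∀ z ∈ ball (0:ℂ) ρ₀,
      ‖f ε z - ((1 - ε : ℝ) : ℂ) * z * (1 + z ^ q)‖ ≤ C₀ * ‖z‖ ^ (2 * q + 1)) :
    ∃ ε₀ : ℝ, 0 < ε₀ ∧ ε₀ ≤ 1 ∧ ∀ ε : ℝ, 0 < ε → ε < ε₀ →
      {z : ℂ | ‖z‖ ^ q ≤ ε / 2} ⊆ ball (0:ℂ) ρ₀ ∧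
      (∀ z : ℂ, ‖z‖ ^ q ≤ ε / 2 → z ≠ 0 → ‖f ε z‖ < ‖z‖) ∧
      f ε '' {z : ℂ | ‖z‖ ^ q ≤ ε / 2} ⊆ interior {z : ℂ | ‖z‖ ^ q ≤ ε / 2} := by
  have hm : (0:ℝ) < min ρ₀ 1 := lt_min hρ₀ one_pos
  refine ⟨min 1 (min (2 / C₀) (2 * (min ρ₀ 1) ^ q)), by positivity, min_le_left _ _, ?_⟩
  intro ε hε hεlt
  have hε1 : ε < 1 := lt_of_lt_of_le hεlt (min_le_left _ _)
  have hεC : ε < 2 / C₀ :=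
    lt_of_lt_of_le hεlt ((min_le_right _ _).trans (min_le_left _ _))
  have hερ : ε < 2 * (min ρ₀ 1) ^ q :=
    lt_of_lt_of_le hεlt ((min_le_right _ _).trans (min_le_right _ _))
  have hεIoo : ε ∈ Ioo (0:ℝ) 1 := ⟨hε, hε1⟩
  have hsub : {z : ℂ | ‖z‖ ^ q ≤ ε / 2} ⊆ ball (0:ℂ) ρ₀ := by
    intro z hz
    simp only [mem_setOf_eq] at hz
    have h1 : ‖z‖ ^ q < (min ρ₀ 1) ^ q := lt_of_le_of_lt hz (by linarith)
    have h2 : ‖z‖ < min ρ₀ 1 := lt_of_pow_lt_pow_left₀ q hm.le h1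
    exact mem_ball_zero_iff.mpr (h2.trans_le (min_le_left _ _))
  set K : ℝ := 1 - ε / 2 - ε ^ 2 / 2 + C₀ * ε ^ 2 / 4 with hKdef
  have hK : K < 1 := by
    have hCε : C₀ * ε < 2 := by
      rw [lt_div_iff₀ hC₀] at hεC; linarith [hεC]
    rw [hKdef]
    nlinarith [mul_lt_mul_of_pos_right hCε hε, sq_nonneg ε]
  have key : ∀ z : ℂ, ‖z‖ ^ q ≤ ε / 2 → ‖f ε z‖ ≤ K * ‖z‖ := by
    intro z hz
    have hb := hbound ε hεIoo z (hsub hz)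
    have hzn : (0:ℝ) ≤ ‖z‖ := norm_nonneg z
    have hzq : (0:ℝ) ≤ ‖z‖ ^ q := pow_nonneg hzn q
    have hmain : ‖((1 - ε : ℝ) : ℂ) * z * (1 + z ^ q)‖ ≤ (1 - ε) * ‖z‖ * (1 + ε / 2) := by
      rw [norm_mul, norm_mul, Complex.norm_real]
      have h1 : ‖(1 - ε : ℝ)‖ = 1 - ε := abs_of_nonneg (by linarith)
      have h2 : ‖1 + z ^ q‖ ≤ 1 + ‖z‖ ^ q := by
        calc ‖1 + z ^ q‖ ≤ ‖(1:ℂ)‖ + ‖z ^ q‖ := norm_add_le _ _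
        _ = 1 + ‖z‖ ^ q := by rw [norm_one, norm_pow]
      rw [h1]
      have h3 : 1 + ‖z‖ ^ q ≤ 1 + ε / 2 := by linarith
      have := h2.trans h3
      nlinarith [mul_nonneg (by linarith : (0:ℝ) ≤ 1 - ε) hzn, this,
        norm_nonneg (1 + z ^ q)]
    have herr : C₀ * ‖z‖ ^ (2 * q + 1) ≤ C₀ * ε ^ 2 / 4 * ‖z‖ := by
      have : ‖z‖ ^ (2 * q + 1) = (‖z‖ ^ q) ^ 2 * ‖z‖ := by rw [pow_succ, pow_mul']
      rw [this]
      have h4 : (‖z‖ ^ q) ^ 2 ≤ (ε / 2) ^ 2 := by nlinarith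
      have h5 := mul_le_mul_of_nonneg_right h4 hzn
      nlinarith [mul_le_mul_of_nonneg_left h5 hC₀.le]
    have := norm_sub_norm_le (f ε z) (((1 - ε : ℝ) : ℂ) * z * (1 + z ^ q))
    have hfb : ‖f ε z‖ ≤ (1 - ε) * ‖z‖ * (1 + ε / 2) + C₀ * ε ^ 2 / 4 * ‖z‖ := by
      linarith [hb.trans herr]
    calc ‖f ε z‖ ≤ (1 - ε) * ‖z‖ * (1 + ε / 2) + C₀ * ε ^ 2 / 4 * ‖z‖ := hfb
    _ = K * ‖z‖ := by rw [hKdef]; ring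
  have hlt : ∀ z : ℂ, ‖z‖ ^ q ≤ ε / 2 → z ≠ 0 → ‖f ε z‖ < ‖z‖ := by
    intro z hz hz0
    have hzpos : (0:ℝ) < ‖z‖ := norm_pos_iff.mpr hz0
    calc ‖f ε z‖ ≤ K * ‖z‖ := key z hz
    _ < 1 * ‖z‖ := by exact mul_lt_mul_of_pos_right hK hzpos
    _ = ‖z‖ := one_mul _
  refine ⟨hsub, hlt, ?_⟩
  have hopen : IsOpen {z : ℂ | ‖z‖ ^ q < ε / 2} := by
    have : Continuous fun z : ℂ => ‖z‖ ^ q := (continuous_norm).pow q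
    exact isOpen_lt this continuous_const
  have hss : {z : ℂ | ‖z‖ ^ q < ε / 2} ⊆ {z : ℂ | ‖z‖ ^ q ≤ ε / 2} :=
    fun z hz => le_of_lt (show ‖z‖ ^ q < ε / 2 from hz)
  rintro w ⟨z, hz, rfl⟩
  simp only [mem_setOf_eq] at hz
  apply interior_maximal hss hopen
  simp only [mem_setOf_eq]
  by_cases hz0 : z = 0
  · have h0 : ‖f ε z‖ ≤ 0 := by
      have := key z hz
      simp [hz0] at this ⊢
      simpa [hz0] using this
    have : ‖f ε z‖ = 0 := le_antisymm h0 (norm_nonneg _)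
    rw [this, zero_pow (by omega : q ≠ 0)]
    linarith
  · have h1 : ‖f ε z‖ < ‖z‖ := hlt z hz hz0
    have h2 : ‖f ε z‖ ^ q < ‖z‖ ^ q :=
      pow_lt_pow_left₀ h1 (norm_nonneg _) (by omega)
    exact lt_of_lt_of_le h2 hz
end

section
/- With F, G, I and H as defined, the set ℂ ∖ I is mapped into itself by F, the map H is a homeomorphism from ℂ ∖ I onto ℂ, and H(F(W)) = G(H(W)) = H(W) + 1 for every W ∈ ℂ ∖ I; that is, H conjugates the action of F on ℂ ∖ I to the action of G on ℂ. -/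
/-!
In the variable `z = a - W` the domain `ℂ ∖ I` becomes the slit plane `ℂ ∖ (-∞, 0]`, and since
`a` is the fixed point of `F`, the map `F` becomes the dilation `z ↦ R z`. In these terms `H`
depends on the polar coordinates `(‖z‖, arg z) ∈ (0, ∞) × (-π, π)` separately: its real part is
affine in `log ‖z‖` and its imaginary part is `-2a tan (arg z / 2)`. Both are bijections onto `ℝ`
with explicit continuous inverses (`exp` and `-2 arctan (· / 2a)`), so `H` is a homeomorphism; and
the dilation by `R` shifts `log ‖z‖` by `log R` while fixing `arg z`, which adds `1` to `H`.
-/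

open Complex Set

lemma ofReal_sub_mem_slitPlane_iff {a : ℝ} {W : ℂ} :
    (a : ℂ) - W ∈ slitPlane ↔ W ∉ {w : ℂ | w.im = 0 ∧ a ≤ w.re} := by
  rw [mem_slitPlane_iff, mem_ofPred_eq, not_and_or, not_le, sub_re, sub_im, ofReal_re,
    ofReal_im, zero_sub, neg_ne_zero, sub_pos, or_comm]

/-- In the variable `z = a - W`, the map `H` of the paper is `W ↦ fundamentalCoord R a (a - W)`. -/
noncomputable def fundamentalCoord (R a : ℝ) (z : ℂ) : ℂ :=
  (((Real.log ‖z‖ - Real.log a) / Real.log R : ℝ) : ℂ) -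
    ((2 * a * Real.tan (arg z / 2) : ℝ) : ℂ) * I

noncomputable def fundamentalCoordInv (R a : ℝ) (ζ : ℂ) : ℂ :=
  (Real.exp (Real.log a + ζ.re * Real.log R) : ℂ) *
    exp ((-2 * Real.arctan (ζ.im / (2 * a)) : ℝ) * I)

lemma ofReal_mul_mem_slitPlane {c : ℝ} (hc : 0 < c) {z : ℂ} (hz : z ∈ slitPlane) :
    (c : ℂ) * z ∈ slitPlane :=
  mem_slitPlane_iff_arg.2 ⟨by rw [arg_real_mul z hc]; exact slitPlane_arg_ne_pi hz,
    mul_ne_zero (ofReal_ne_zero.2 hc.ne') (slitPlane_ne_zero hz)⟩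

lemma arg_div_two_mem_Ioo {z : ℂ} (hz : z ∈ slitPlane) :
    arg z / 2 ∈ Ioo (-(Real.pi / 2)) (Real.pi / 2) :=
  ⟨by linarith [neg_pi_lt_arg z],
    by linarith [lt_of_le_of_ne (arg_le_pi z) (slitPlane_arg_ne_pi hz)]⟩

section FundamentalCoord

variable {R a : ℝ}

lemma norm_fundamentalCoordInv (ζ : ℂ) :
    ‖fundamentalCoordInv R a ζ‖ = Real.exp (Real.log a + ζ.re * Real.log R) := by
  rw [fundamentalCoordInv, norm_mul, norm_exp_ofReal_mul_I, mul_one, norm_real,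
    Real.norm_of_nonneg (Real.exp_pos _).le]

lemma arg_fundamentalCoordInv (ζ : ℂ) :
    arg (fundamentalCoordInv R a ζ) = -2 * Real.arctan (ζ.im / (2 * a)) := by
  have h := Real.arctan_mem_Ioo (ζ.im / (2 * a))
  rw [fundamentalCoordInv, exp_mul_I, arg_mul_cos_add_sin_mul_I (Real.exp_pos _)]
  constructor <;> linarith [h.1, h.2]

lemma fundamentalCoordInv_mem_slitPlane (ζ : ℂ) : fundamentalCoordInv R a ζ ∈ slitPlane := by
  have h := Real.arctan_mem_Ioo (ζ.im / (2 * a))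
  refine mem_slitPlane_iff_arg.2 ⟨?_, fun h0 => ?_⟩
  · rw [arg_fundamentalCoordInv]
    linarith [h.1]
  · have := norm_fundamentalCoordInv (R := R) (a := a) ζ
    rw [h0, norm_zero] at this
    exact (Real.exp_pos _).ne this

lemma fundamentalCoord_fundamentalCoordInv (hR : Real.log R ≠ 0) (ha : a ≠ 0) (ζ : ℂ) :
    fundamentalCoord R a (fundamentalCoordInv R a ζ) = ζ := by
  rw [fundamentalCoord, norm_fundamentalCoordInv, arg_fundamentalCoordInv, Real.log_exp,
    add_sub_cancel_left, mul_div_cancel_right₀ _ hR, neg_mul, neg_div,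
    mul_div_cancel_left₀ _ two_ne_zero, Real.tan_neg, Real.tan_arctan, mul_neg,
    mul_div_cancel₀ _ (mul_ne_zero two_ne_zero ha)]
  apply Complex.ext <;> simp

lemma fundamentalCoordInv_fundamentalCoord (hR : Real.log R ≠ 0) (ha : a ≠ 0) {z : ℂ}
    (hz : z ∈ slitPlane) : fundamentalCoordInv R a (fundamentalCoord R a z) = z := by
  have hθ := arg_div_two_mem_Ioo hz
  have hre : (fundamentalCoord R a z).re = (Real.log ‖z‖ - Real.log a) / Real.log R := by
    simp only [fundamentalCoord, sub_re, mul_re, ofReal_re, ofReal_im, I_re, I_im]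
    ring
  have him : (fundamentalCoord R a z).im = -(2 * a * Real.tan (arg z / 2)) := by
    simp only [fundamentalCoord, sub_im, mul_im, ofReal_re, ofReal_im, I_re, I_im]
    ring
  have hnorm : Real.exp (Real.log a + (Real.log ‖z‖ - Real.log a) / Real.log R * Real.log R)
      = ‖z‖ := by
    rw [div_mul_cancel₀ _ hR, add_sub_cancel, Real.exp_log (norm_pos_iff.2 (slitPlane_ne_zero hz))]
  have harg : -2 * Real.arctan (-(2 * a * Real.tan (arg z / 2)) / (2 * a)) = arg z := by
    rw [neg_div, mul_div_cancel_left₀ _ (mul_ne_zero two_ne_zero ha), ← Real.tan_neg,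
      Real.arctan_tan (by linarith [hθ.2]) (by linarith [hθ.1])]
    ring
  rw [fundamentalCoordInv, hre, him, hnorm, harg, norm_mul_exp_arg_mul_I]

lemma continuousOn_fundamentalCoord : ContinuousOn (fundamentalCoord R a) slitPlane := by
  intro z hz
  have hcos : Real.cos (arg z / 2) ≠ 0 := (Real.cos_pos_of_mem_Ioo (arg_div_two_mem_Ioo hz)).ne'
  have htan : ContinuousAt (fun z : ℂ => Real.tan (arg z / 2)) z :=
    (Real.continuousAt_tan.2 hcos).comp (f := fun z : ℂ => arg z / 2)
      ((continuousAt_arg hz).div_const 2)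
  have hlog : ContinuousAt (fun z : ℂ => Real.log ‖z‖) z :=
    continuous_norm.continuousAt.log (norm_ne_zero_iff.2 (slitPlane_ne_zero hz))
  refine ContinuousAt.continuousWithinAt ?_
  unfold fundamentalCoord
  fun_prop

lemma continuous_fundamentalCoordInv : Continuous (fundamentalCoordInv R a) := by
  unfold fundamentalCoordInv
  fun_prop

noncomputable def fundamentalCoordHomeomorph (hR : Real.log R ≠ 0) (ha : a ≠ 0) :
    slitPlane ≃ₜ ℂ where
  toFun z := fundamentalCoord R a z
  invFun ζ := ⟨fundamentalCoordInv R a ζ, fundamentalCoordInv_mem_slitPlane ζ⟩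
  left_inv z := Subtype.ext (fundamentalCoordInv_fundamentalCoord hR ha z.2)
  right_inv := fundamentalCoord_fundamentalCoordInv hR ha
  continuous_toFun := continuousOn_iff_continuous_domRestrict.1 continuousOn_fundamentalCoord
  continuous_invFun := continuous_fundamentalCoordInv.subtype_mk _

lemma fundamentalCoord_ofReal_mul {c : ℝ} (hc : 0 < c) {z : ℂ} (hz : z ≠ 0) :
    fundamentalCoord R a (c * z) = fundamentalCoord R a z + (Real.log c / Real.log R : ℝ) := by
  rw [fundamentalCoord, fundamentalCoord, arg_real_mul z hc, norm_mul, norm_real,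
    Real.norm_of_nonneg hc.le, Real.log_mul hc.ne' (norm_ne_zero_iff.2 hz)]
  push_cast
  ring

lemma apply_eq_fundamentalCoord {H : ℂ → ℂ}
    (hH : ∀ ρ t : ℝ, 0 < ρ → 0 < t → t < 2 * Real.pi →
      H ((a : ℂ) + (ρ : ℂ) * exp ((t : ℂ) * I)) =
        (((Real.log ρ - Real.log a) / Real.log R : ℝ) : ℂ) +
        ((2 * a * Real.tan ((Real.pi - t) / 2) : ℝ) : ℂ) * I)
    {W : ℂ} (hW : (a : ℂ) - W ∈ slitPlane) : H W = fundamentalCoord R a (a - W) := by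
  obtain ⟨z, rfl⟩ : ∃ z, W = a - z := ⟨a - W, by ring⟩
  rw [sub_sub_cancel] at hW ⊢
  have hpolar : (a : ℂ) + (‖z‖ : ℂ) * exp (((Real.pi + arg z : ℝ) : ℂ) * I) = a - z := by
    rw [ofReal_add, add_mul, exp_add, exp_pi_mul_I]
    linear_combination -norm_mul_exp_arg_mul_I z
  have hθ := arg_div_two_mem_Ioo hW
  rw [← hpolar, hH _ _ (norm_pos_iff.2 (slitPlane_ne_zero hW)) (by linarith [hθ.1])
    (by linarith [hθ.2]), fundamentalCoord,
    show (Real.pi - (Real.pi + arg z)) / 2 = -(arg z / 2) by ring, Real.tan_neg]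
  push_cast
  ring

end FundamentalCoord

/-- Conjugacy on the fundamental model (Section 4, Step 1): with `0 < R < 1`,
`a = 1/(1−R)`, `F(W) = RW + 1`, `G(W) = W + 1`, `I = [a,∞) ⊂ ℝ ⊂ ℂ`, and
`H(a + ρ e^{it}) = (log ρ − log a)/log R + 2ai·tan((π−t)/2)` for `ρ > 0`, `0 < t < 2π`,
the set `ℂ ∖ I` is mapped into itself by `F`, `H` is a homeomorphism from `ℂ ∖ I` onto
`ℂ`, and `H(F(W)) = G(H(W)) = H(W) + 1` on `ℂ ∖ I`. -/
theorem fundamental_model_conjugacy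
    (R : ℝ) (hR0 : 0 < R) (hR1 : R < 1)
    (a : ℝ) (ha : a = 1 / (1 - R))
    (F G : ℂ → ℂ) (hF : ∀ W : ℂ, F W = (R : ℂ) * W + 1) (hG : ∀ W : ℂ, G W = W + 1)
    (I : Set ℂ) (hI : I = {w : ℂ | w.im = 0 ∧ a ≤ w.re})
    (H : ℂ → ℂ)
    (hH : ∀ ρ t : ℝ, 0 < ρ → 0 < t → t < 2 * Real.pi →
      H ((a : ℂ) + (ρ : ℂ) * Complex.exp ((t : ℂ) * Complex.I)) =
        (((Real.log ρ - Real.log a) / Real.log R : ℝ) : ℂ) +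
        ((2 * a * Real.tan ((Real.pi - t) / 2) : ℝ) : ℂ) * Complex.I) :
    MapsTo F Iᶜ Iᶜ ∧
    (∃ e : (Iᶜ : Set ℂ) ≃ₜ ℂ, ∀ w : (Iᶜ : Set ℂ), e w = H (w : ℂ)) ∧
    (∀ W ∈ Iᶜ, H (F W) = G (H W) ∧ G (H W) = H W + 1) := by
  subst hI
  have hlogR : Real.log R ≠ 0 := (Real.log_neg hR0 hR1).ne
  have haR : a * (1 - R) = 1 := by rw [ha]; exact one_div_mul_cancel (by linarith)
  have hmem (W : ℂ) : W ∈ {w : ℂ | w.im = 0 ∧ a ≤ w.re}ᶜ ↔ (a : ℂ) - W ∈ slitPlane :=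
    ofReal_sub_mem_slitPlane_iff.symm
  -- `a` is the fixed point of `F`, so `F` is the dilation by `R` about `a`.
  have hFa (W : ℂ) : (a : ℂ) - F W = R * ((a : ℂ) - W) := by
    have : (a : ℂ) * (1 - R) = 1 := by exact_mod_cast haR
    rw [hF]
    linear_combination this
  have hmaps : MapsTo F {w : ℂ | w.im = 0 ∧ a ≤ w.re}ᶜ {w : ℂ | w.im = 0 ∧ a ≤ w.re}ᶜ :=
    fun W hW => (hmem _).2 <| by rw [hFa]; exact ofReal_mul_mem_slitPlane hR0 ((hmem W).1 hW)
  refine ⟨hmaps, ⟨((Homeomorph.subLeft (a : ℂ)).subtype hmem).trans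
    (fundamentalCoordHomeomorph hlogR (left_ne_zero_of_mul_eq_one haR)), fun w => ?_⟩,
    fun W hW => ⟨?_, hG _⟩⟩
  · exact (apply_eq_fundamentalCoord hH ((hmem w).1 w.2)).symm
  · rw [hG, apply_eq_fundamentalCoord hH ((hmem _).1 (hmaps hW)),
      apply_eq_fundamentalCoord hH ((hmem W).1 hW), hFa,
      fundamentalCoord_ofReal_mul hR0 (slitPlane_ne_zero ((hmem W).1 hW)), div_self hlogR,
      ofReal_one]
end

section
/- With F, G, I, H and the tiles A_μ(±), C_μ(±) as defined, for every μ ∈ ℤ the map H restricts to a homeomorphism from A_μ(+) onto C_μ(+) and from A_μ(−) onto C_μ(−); in particular H(A_μ(+)) = C_μ(+) and H(A_μ(−)) = C_μ(−). -/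
open Complex Set Metric Filter Topology

/-- The tile `A_μ(+)` of the fundamental model:
`{W ∈ ℂ ∖ I : R^{μ+1} a ≤ |W − a| ≤ R^μ a, Im W ≥ 0}`. -/
def tileAplus (R a : ℝ) (I : Set ℂ) (μ : ℤ) : Set ℂ :=
  {W : ℂ | W ∉ I ∧ R ^ (μ + 1) * a ≤ ‖W - (a : ℂ)‖ ∧ ‖W - (a : ℂ)‖ ≤ R ^ μ * a ∧
    0 ≤ W.im}

/-- The tile `A_μ(−)` of the fundamental model. -/
def tileAminus (R a : ℝ) (I : Set ℂ) (μ : ℤ) : Set ℂ :=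
  {W : ℂ | W ∉ I ∧ R ^ (μ + 1) * a ≤ ‖W - (a : ℂ)‖ ∧ ‖W - (a : ℂ)‖ ≤ R ^ μ * a ∧
    W.im ≤ 0}

/-- The tile `C_μ(+) = {μ ≤ Re W ≤ μ+1, Im W ≥ 0}` of the fundamental model. -/
def tileCplus (μ : ℤ) : Set ℂ :=
  {W : ℂ | (μ : ℝ) ≤ W.re ∧ W.re ≤ (μ : ℝ) + 1 ∧ 0 ≤ W.im}

/-- The tile `C_μ(−) = {μ ≤ Re W ≤ μ+1, Im W ≤ 0}` of the fundamental model. -/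
def tileCminus (μ : ℤ) : Set ℂ :=
  {W : ℂ | (μ : ℝ) ≤ W.re ∧ W.re ≤ (μ : ℝ) + 1 ∧ W.im ≤ 0}

/-! Writing `W = a + ρ e^{it}` with `t = θ + π`, `θ = arg (a - W) ∈ (-π, π)`, the map `H` is
`W ↦ (log ‖W - a‖ - log a) / log R - 2a tan (θ / 2) i` on `ℂ ∖ I = {W | a - W ∈ slitPlane}`,
where `arg` is continuous. It has the continuous inverse
`v ↦ a - a R^{Re v} exp (-2i arctan (Im v / 2a))`, so `H` is a homeomorphism of `ℂ ∖ I` onto `ℂ`,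
and each tile `A_μ(±)` is the preimage of `C_μ(±)`: as `log R < 0`, the annulus
`R^{μ+1} a ≤ ‖W - a‖ ≤ R^μ a` is the preimage of the strip `μ ≤ Re ≤ μ + 1`, and
`Im W = -‖W - a‖ sin θ` is a positive multiple of `Im H(W) = -2a tan (θ / 2)`.
-/

theorem Set.InvOn.exists_homeomorph {X Y : Type*} [TopologicalSpace X] [TopologicalSpace Y]
    {f : X → Y} {g : Y → X} {s : Set X} {t : Set Y} (h : InvOn g f s t) (hf : MapsTo f s t)
    (hg : MapsTo g t s) (hfc : ContinuousOn f s) (hgc : ContinuousOn g t) :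
    ∃ e : s ≃ₜ t, ∀ x : s, (e x : Y) = f x :=
  ⟨{ toFun := hf.restrict f s t
     invFun := hg.restrict g t s
     left_inv := fun x => Subtype.ext (h.1 x.2)
     right_inv := fun y => Subtype.ext (h.2 y.2)
     continuous_toFun := hfc.mapsToRestrict hf
     continuous_invFun := hgc.mapsToRestrict hg }, fun _ => rfl⟩

theorem exists_homeomorph_inter_preimage {X Y : Type*} [TopologicalSpace X]
    [TopologicalSpace Y] {f : X → Y} {g : Y → X} {s : Set X} (hfc : ContinuousOn f s)
    (hgc : Continuous g) (hgs : ∀ y, g y ∈ s) (hgf : LeftInvOn g f s)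
    (hfg : Function.LeftInverse f g) (t : Set Y) :
    (∃ e : ↥(s ∩ f ⁻¹' t) ≃ₜ t, ∀ x, (e x : Y) = f x) ∧ f '' (s ∩ f ⁻¹' t) = t := by
  have hinv : InvOn g f (s ∩ f ⁻¹' t) t :=
    ⟨fun x hx => hgf hx.1, fun y _ => hfg y⟩
  have hg : MapsTo g t (s ∩ f ⁻¹' t) := fun y hy => ⟨hgs y, by rwa [mem_preimage, hfg y]⟩
  refine ⟨hinv.exists_homeomorph (fun x hx => hx.2) hg (hfc.mono inter_subset_left)
    hgc.continuousOn, ?_⟩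
  exact (hinv.bijOn (fun x hx => hx.2) hg).image_eq

namespace FundamentalModel

noncomputable def chart (R a : ℝ) (W : ℂ) : ℂ :=
  ((Real.log ‖W - a‖ - Real.log a) / Real.log R : ℝ) +
    (-(2 * a * Real.tan (arg (a - W) / 2)) : ℝ) * I

noncomputable def chartInv (R a : ℝ) (v : ℂ) : ℂ :=
  a - (a * Real.exp (v.re * Real.log R) : ℝ) *
    exp ((-(2 * Real.arctan (v.im / (2 * a))) : ℝ) * I)

def slitDomain (a : ℝ) : Set ℂ := {W | (a : ℂ) - W ∈ slitPlane}

variable {R a : ℝ} {W : ℂ}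

theorem notMem_iff_mem_slitDomain {I : Set ℂ} (hI : I = {w : ℂ | w.im = 0 ∧ a ≤ w.re}) :
    W ∉ I ↔ W ∈ slitDomain a := by
  subst hI
  simp [slitDomain, mem_slitPlane_iff, imp_iff_not_or, or_comm]

@[simp] theorem chart_re : (chart R a W).re = (Real.log ‖W - a‖ - Real.log a) / Real.log R := by
  simp only [chart, add_re, ofReal_re, re_ofReal_mul, I_re, mul_zero, add_zero]

@[simp] theorem chart_im : (chart R a W).im = -(2 * a * Real.tan (arg (a - W) / 2)) := by
  simp only [chart, add_im, ofReal_im, im_ofReal_mul, I_im, mul_one, zero_add]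

theorem half_arg_mem_Ioo {z : ℂ} (hz : z ∈ slitPlane) :
    arg z / 2 ∈ Ioo (-(Real.pi / 2)) (Real.pi / 2) := by
  have := neg_pi_lt_arg z
  have := arg_lt_pi_iff.2 ((mem_slitPlane_iff.1 hz).imp_left le_of_lt)
  constructor <;> linarith

theorem eqOn_chart {H : ℂ → ℂ}
    (hH : ∀ ρ t : ℝ, 0 < ρ → 0 < t → t < 2 * Real.pi →
      H ((a : ℂ) + (ρ : ℂ) * Complex.exp ((t : ℂ) * Complex.I)) =
        (((Real.log ρ - Real.log a) / Real.log R : ℝ) : ℂ) +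
        ((2 * a * Real.tan ((Real.pi - t) / 2) : ℝ) : ℂ) * Complex.I) :
    EqOn H (chart R a) (slitDomain a) := by
  intro W hW
  set z : ℂ := a - W
  have hz : z ≠ 0 := slitPlane_ne_zero hW
  have harg : arg z < Real.pi := lt_of_le_of_ne (arg_le_pi z) (mem_slitPlane_iff_arg.1 hW).1
  have hpolar : W = a + (‖z‖ : ℂ) * exp ((arg z + Real.pi : ℝ) * I) := by
    rw [ofReal_add, add_mul, exp_add, exp_pi_mul_I, mul_neg_one, mul_neg,
      norm_mul_exp_arg_mul_I]
    ring
  have hnorm : ‖W - a‖ = ‖z‖ := norm_sub_rev _ _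
  conv_lhs => rw [hpolar]
  rw [hH _ _ (norm_pos_iff.2 hz) (by linarith [neg_pi_lt_arg z]) (by linarith),
    show (Real.pi - (arg z + Real.pi)) / 2 = -(arg z / 2) by ring, Real.tan_neg]
  apply Complex.ext <;> simp [hnorm, z, -ofReal_tan]

theorem continuousOn_chart : ContinuousOn (chart R a) (slitDomain a) := by
  intro W hW
  have hz : W - a ≠ 0 := by rw [← neg_sub]; exact neg_ne_zero.2 (slitPlane_ne_zero hW)
  have hcos : Real.cos (arg (a - W) / 2) ≠ 0 :=
    (Real.cos_pos_of_mem_Ioo (half_arg_mem_Ioo hW)).ne'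
  have harg : ContinuousAt (fun W : ℂ => arg (a - W)) W :=
    (continuousAt_arg hW).comp (continuous_const.sub continuous_id).continuousAt
  have htan : ContinuousAt (fun W : ℂ => Real.tan (arg (a - W) / 2)) W :=
    (Real.continuousAt_tan.2 hcos).comp (f := fun W : ℂ => arg (a - W) / 2) (harg.div_const 2)
  have hlog : ContinuousAt (fun W : ℂ => Real.log ‖W - a‖) W :=
    (continuous_norm.comp (continuous_id.sub continuous_const)).continuousAt.log
      (norm_ne_zero_iff.2 hz)
  exact ((continuous_ofReal.continuousAt.comp ((hlog.sub continuousAt_const).div_const _)).add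
    ((continuous_ofReal.continuousAt.comp (htan.const_mul _).neg).mul
      continuousAt_const)).continuousWithinAt

theorem continuous_chartInv : Continuous (chartInv R a) := by
  unfold chartInv
  fun_prop

theorem sub_chartInv (v : ℂ) :
    a - chartInv R a v = (a * Real.exp (v.re * Real.log R) : ℝ) *
      exp ((-(2 * Real.arctan (v.im / (2 * a))) : ℝ) * I) :=
  sub_sub_cancel _ _

theorem norm_chartInv_sub (ha : 0 < a) (v : ℂ) :
    ‖chartInv R a v - a‖ = a * Real.exp (v.re * Real.log R) := by
  rw [norm_sub_rev, sub_chartInv, norm_mul, norm_exp_ofReal_mul_I, mul_one, norm_real,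
    Real.norm_of_nonneg (by positivity)]

theorem arg_sub_chartInv (ha : 0 < a) (v : ℂ) :
    arg (a - chartInv R a v) = -(2 * Real.arctan (v.im / (2 * a))) := by
  have := Real.neg_pi_div_two_lt_arctan (v.im / (2 * a))
  have := Real.arctan_lt_pi_div_two (v.im / (2 * a))
  rw [sub_chartInv, exp_mul_I,
    arg_mul_cos_add_sin_mul_I (by positivity) ⟨by linarith, by linarith⟩]

theorem chartInv_mem_slitDomain (ha : 0 < a) (v : ℂ) : chartInv R a v ∈ slitDomain a := by
  have := Real.neg_pi_div_two_lt_arctan (v.im / (2 * a))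
  refine mem_slitPlane_iff_arg.2 ⟨?_, ?_⟩
  · rw [arg_sub_chartInv ha]
    linarith [Real.pi_pos]
  · rw [← norm_ne_zero_iff, norm_sub_rev, norm_chartInv_sub ha]
    positivity

theorem chart_chartInv (ha : 0 < a) (hR : Real.log R ≠ 0) (v : ℂ) :
    chart R a (chartInv R a v) = v := by
  apply Complex.ext
  · rw [chart_re, norm_chartInv_sub ha, Real.log_mul ha.ne' (Real.exp_ne_zero _), Real.log_exp]
    field_simp
    ring
  · rw [chart_im, arg_sub_chartInv ha, show -(2 * Real.arctan (v.im / (2 * a))) / 2 =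
      -Real.arctan (v.im / (2 * a)) by ring, Real.tan_neg, Real.tan_arctan]
    field_simp

theorem chartInv_chart (ha : 0 < a) (hR : Real.log R ≠ 0) (hW : W ∈ slitDomain a) :
    chartInv R a (chart R a W) = W := by
  set z : ℂ := a - W
  have hnorm : ‖W - a‖ = ‖z‖ := norm_sub_rev _ _
  have hz : 0 < ‖z‖ := norm_pos_iff.2 (slitPlane_ne_zero hW)
  have hρ : a * Real.exp ((chart R a W).re * Real.log R) = ‖z‖ := by
    rw [chart_re, div_mul_cancel₀ _ hR, Real.exp_sub, Real.exp_log (hnorm ▸ hz),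
      Real.exp_log ha, hnorm]
    field_simp
  have hθ : -(2 * Real.arctan ((chart R a W).im / (2 * a))) = arg z := by
    obtain ⟨h1, h2⟩ := half_arg_mem_Ioo hW
    rw [chart_im, neg_div, mul_div_cancel_left₀ _ (by positivity), Real.arctan_neg,
      Real.arctan_tan h1 h2]
    ring
  rw [← sub_sub_cancel (a : ℂ) (chartInv R a _), sub_chartInv, hρ, hθ,
    norm_mul_exp_arg_mul_I, sub_sub_cancel]

theorem exists_pos_im_eq_mul_im_chart (ha : 0 < a) (hW : W ∈ slitDomain a) :
    ∃ c : ℝ, 0 < c ∧ W.im = c * (chart R a W).im := by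
  have hz : (a : ℂ) - W ≠ 0 := slitPlane_ne_zero hW
  obtain ⟨h1, h2⟩ := half_arg_mem_Ioo hW
  rw [chart_im, show W.im = -((a : ℂ) - W).im by simp]
  generalize (a : ℂ) - W = z at hz h1 h2 ⊢
  have hcos : 0 < Real.cos (arg z / 2) := Real.cos_pos_of_mem_Ioo ⟨h1, h2⟩
  have hsin : z.im = ‖z‖ * Real.sin (2 * (arg z / 2)) := by
    rw [mul_div_cancel₀ _ two_ne_zero, sin_arg, mul_div_cancel₀ _ (norm_ne_zero_iff.2 hz)]
  refine ⟨‖z‖ * Real.cos (arg z / 2) ^ 2 / a, by positivity, ?_⟩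
  rw [hsin, Real.sin_two_mul, Real.tan_eq_sin_div_cos]
  field_simp

theorem zpow_mul_le_iff (hR0 : 0 < R) (hR1 : R < 1) (ha : 0 < a) {ρ : ℝ} (hρ : 0 < ρ) (n : ℤ) :
    R ^ n * a ≤ ρ ↔ (Real.log ρ - Real.log a) / Real.log R ≤ n := by
  rw [div_le_iff_of_neg (Real.log_neg hR0 hR1), ← Real.log_le_log_iff (by positivity) hρ,
    Real.log_mul (zpow_pos hR0 n).ne' ha.ne', Real.log_zpow]
  constructor <;> intro h <;> linarith

theorem le_zpow_mul_iff (hR0 : 0 < R) (hR1 : R < 1) (ha : 0 < a) {ρ : ℝ} (hρ : 0 < ρ) (n : ℤ) :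
    ρ ≤ R ^ n * a ↔ n ≤ (Real.log ρ - Real.log a) / Real.log R := by
  rw [le_div_iff_of_neg (Real.log_neg hR0 hR1), ← Real.log_le_log_iff hρ (by positivity),
    Real.log_mul (zpow_pos hR0 n).ne' ha.ne', Real.log_zpow]
  constructor <;> intro h <;> linarith

theorem mem_annulus_iff (hR0 : 0 < R) (hR1 : R < 1) (ha : 0 < a) (hW : W ∈ slitDomain a)
    (μ : ℤ) :
    (R ^ (μ + 1) * a ≤ ‖W - a‖ ∧ ‖W - a‖ ≤ R ^ μ * a) ↔
      ((μ : ℝ) ≤ (chart R a W).re ∧ (chart R a W).re ≤ μ + 1) := by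
  have hρ : 0 < ‖W - a‖ := by
    rw [norm_sub_rev]
    exact norm_pos_iff.2 (slitPlane_ne_zero hW)
  rw [zpow_mul_le_iff hR0 hR1 ha hρ, le_zpow_mul_iff hR0 hR1 ha hρ, chart_re, and_comm]
  push_cast
  rfl

theorem tileAplus_eq (hR0 : 0 < R) (hR1 : R < 1) (ha : 0 < a) {I : Set ℂ}
    (hI : I = {w : ℂ | w.im = 0 ∧ a ≤ w.re}) (μ : ℤ) :
    tileAplus R a I μ = slitDomain a ∩ chart R a ⁻¹' tileCplus μ := by
  ext W
  simp only [tileAplus, tileCplus, mem_inter_iff, mem_preimage, mem_ofPred_eq,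
    notMem_iff_mem_slitDomain hI]
  refine and_congr_right fun hW => ?_
  obtain ⟨c, hc, him⟩ := exists_pos_im_eq_mul_im_chart (R := R) ha hW
  rw [← and_assoc, mem_annulus_iff hR0 hR1 ha hW μ, him, mul_nonneg_iff_of_pos_left hc,
    and_assoc]

theorem tileAminus_eq (hR0 : 0 < R) (hR1 : R < 1) (ha : 0 < a) {I : Set ℂ}
    (hI : I = {w : ℂ | w.im = 0 ∧ a ≤ w.re}) (μ : ℤ) :
    tileAminus R a I μ = slitDomain a ∩ chart R a ⁻¹' tileCminus μ := by
  ext W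
  simp only [tileAminus, tileCminus, mem_inter_iff, mem_preimage, mem_ofPred_eq,
    notMem_iff_mem_slitDomain hI]
  refine and_congr_right fun hW => ?_
  obtain ⟨c, hc, him⟩ := exists_pos_im_eq_mul_im_chart (R := R) ha hW
  rw [← and_assoc, mem_annulus_iff hR0 hR1 ha hW μ, ← neg_nonneg, him, ← mul_neg,
    mul_nonneg_iff_of_pos_left hc, neg_nonneg, and_assoc]

end FundamentalModel

open FundamentalModel

theorem fundamental_model_tiles_general
    (R : ℝ) (hR0 : 0 < R) (hR1 : R < 1)
    (a : ℝ) (ha : a = 1 / (1 - R))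
    (I : Set ℂ) (hI : I = {w : ℂ | w.im = 0 ∧ a ≤ w.re})
    (H : ℂ → ℂ)
    (hH : ∀ ρ t : ℝ, 0 < ρ → 0 < t → t < 2 * Real.pi →
      H ((a : ℂ) + (ρ : ℂ) * Complex.exp ((t : ℂ) * Complex.I)) =
        (((Real.log ρ - Real.log a) / Real.log R : ℝ) : ℂ) +
        ((2 * a * Real.tan ((Real.pi - t) / 2) : ℝ) : ℂ) * Complex.I) :
    ∀ μ : ℤ,
      (∃ e : (tileAplus R a I μ : Set ℂ) ≃ₜ (tileCplus μ : Set ℂ),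
        ∀ w : (tileAplus R a I μ : Set ℂ), (e w : ℂ) = H (w : ℂ)) ∧
      (∃ e : (tileAminus R a I μ : Set ℂ) ≃ₜ (tileCminus μ : Set ℂ),
        ∀ w : (tileAminus R a I μ : Set ℂ), (e w : ℂ) = H (w : ℂ)) ∧
      H '' tileAplus R a I μ = tileCplus μ ∧
      H '' tileAminus R a I μ = tileCminus μ := by
  intro μ
  have ha0 : 0 < a := ha ▸ one_div_pos.2 (sub_pos.2 hR1)
  have hlogR : Real.log R ≠ 0 := (Real.log_neg hR0 hR1).ne
  have hHS : EqOn H (chart R a) (slitDomain a) := eqOn_chart hH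
  have tiles := exists_homeomorph_inter_preimage (continuousOn_chart.congr hHS)
    continuous_chartInv (chartInv_mem_slitDomain ha0)
    (fun W hW => by rw [hHS hW, chartInv_chart ha0 hlogR hW])
    (fun v => by rw [hHS (chartInv_mem_slitDomain ha0 v), chart_chartInv ha0 hlogR])
  rw [tileAplus_eq hR0 hR1 ha0 hI, tileAminus_eq hR0 hR1 ha0 hI, ← hHS.inter_preimage_eq,
    ← hHS.inter_preimage_eq]
  exact ⟨(tiles _).1, (tiles _).1, (tiles _).2, (tiles _).2⟩

/-- The conjugacy `H` of the fundamental model maps tiles to tiles (Section 4, Step 1):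
for every `μ ∈ ℤ`, `H` restricts to a homeomorphism from `A_μ(+)` onto `C_μ(+)` and from
`A_μ(−)` onto `C_μ(−)`; in particular `H(A_μ(±)) = C_μ(±)`. -/
theorem fundamental_model_tiles
    (R : ℝ) (hR0 : 0 < R) (hR1 : R < 1)
    (a : ℝ) (ha : a = 1 / (1 - R))
    (F G : ℂ → ℂ) (hF : ∀ W : ℂ, F W = (R : ℂ) * W + 1) (hG : ∀ W : ℂ, G W = W + 1)
    (I : Set ℂ) (hI : I = {w : ℂ | w.im = 0 ∧ a ≤ w.re})
    (H : ℂ → ℂ)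
    (hH : ∀ ρ t : ℝ, 0 < ρ → 0 < t → t < 2 * Real.pi →
      H ((a : ℂ) + (ρ : ℂ) * Complex.exp ((t : ℂ) * Complex.I)) =
        (((Real.log ρ - Real.log a) / Real.log R : ℝ) : ℂ) +
        ((2 * a * Real.tan ((Real.pi - t) / 2) : ℝ) : ℂ) * Complex.I) :
    ∀ μ : ℤ,
      (∃ e : (tileAplus R a I μ : Set ℂ) ≃ₜ (tileCplus μ : Set ℂ),
        ∀ w : (tileAplus R a I μ : Set ℂ), (e w : ℂ) = H (w : ℂ)) ∧
      (∃ e : (tileAminus R a I μ : Set ℂ) ≃ₜ (tileCminus μ : Set ℂ),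
        ∀ w : (tileAminus R a I μ : Set ℂ), (e w : ℂ) = H (w : ℂ)) ∧
      H '' tileAplus R a I μ = tileCplus μ ∧
      H '' tileAminus R a I μ = tileCminus μ :=
  fundamental_model_tiles_general R hR0 hR1 a ha I hI H hH
end

section
/- With H_ε as defined, for every bounded set D ⊂ ℂ there exists ε₀ > 0 such that D ⊆ ℂ ∖ I_ε for all ε ∈ (0, ε₀), and sup_{W ∈ D} |H_ε(W) − W| → 0 as ε → 0; that is, H_ε converges uniformly to the identity on every bounded subset of ℂ. -/
/-!
Write `ζ = 1 - εW`. Then `W = 1/ε - ζ/ε = 1/ε + (‖ζ‖/ε) e^{i(π + arg ζ)}`, and the half-angle formula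
`tan (arg ζ / 2) = Im ζ / (‖ζ‖ + Re ζ)` turns the definition of `H_ε` into the closed form
`H_ε(W) = log ‖1 - εW‖ / log (1 - ε) + 2i Im W / (‖1 - εW‖ + Re (1 - εW))`.
Since `log ‖1 - εW‖ = -ε Re W + O(ε²)`, `log (1 - ε) = -ε + O(ε²)` and the last denominator is
`2 + O(ε)`, we get `‖H_ε(W) - W‖ = O(ε)` uniformly for `W` in a bounded set.
-/

open Complex Set Metric Filter Topology

/-- No side condition is needed: where `cos (θ / 2) = 0` both sides are `0` (`tan` and `/`
return `0` there). -/
theorem Real.tan_half_eq_sin_div_one_add_cos (θ : ℝ) :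
    Real.tan (θ / 2) = Real.sin θ / (1 + Real.cos θ) := by
  have hsin : Real.sin θ = 2 * Real.sin (θ / 2) * Real.cos (θ / 2) := by
    rw [← Real.sin_two_mul, mul_div_cancel₀ _ two_ne_zero]
  have hcos : 1 + Real.cos θ = 2 * Real.cos (θ / 2) ^ 2 := by
    rw [Real.cos_sq, mul_div_cancel₀ _ two_ne_zero]; ring
  rw [Real.tan_eq_sin_div_cos, hsin, hcos]
  rcases eq_or_ne (Real.cos (θ / 2)) 0 with hc | hc
  · simp [hc]
  · field_simp

namespace Complex

theorem tan_arg_div_two (ζ : ℂ) : Real.tan (arg ζ / 2) = ζ.im / (‖ζ‖ + ζ.re) := by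
  rcases eq_or_ne ζ 0 with rfl | hζ
  · simp
  have hn : ‖ζ‖ ≠ 0 := norm_ne_zero_iff.2 hζ
  rw [Real.tan_half_eq_sin_div_one_add_cos, sin_arg, cos_arg hζ, one_add_div hn,
    div_div_div_cancel_right₀ hn]

theorem neg_eq_norm_mul_exp_pi_add_arg (ζ : ℂ) :
    -ζ = ‖ζ‖ * exp (((Real.pi + arg ζ : ℝ) : ℂ) * I) := by
  conv_lhs => rw [← norm_mul_exp_arg_mul_I ζ]
  push_cast
  rw [add_mul, exp_add, exp_pi_mul_I]
  ring

theorem pi_add_arg_mem_Ioo {ζ : ℂ} (hζ : arg ζ ≠ Real.pi) :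
    Real.pi + arg ζ ∈ Ioo 0 (2 * Real.pi) := by
  have hlt : arg ζ < Real.pi := (arg_le_pi ζ).lt_of_ne hζ
  constructor <;> linarith [neg_pi_lt_arg ζ]

theorem abs_log_norm_one_add_sub_re_le {z : ℂ} (hz : ‖z‖ ≤ 1 / 2) :
    |Real.log ‖1 + z‖ - z.re| ≤ ‖z‖ ^ 2 := by
  have hinv : (1 - ‖z‖)⁻¹ ≤ 2 := by
    rw [inv_le_comm₀ (by linarith) two_pos]; linarith
  calc |Real.log ‖1 + z‖ - z.re| = |(log (1 + z) - z).re| := by rw [sub_re, log_re]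
    _ ≤ ‖log (1 + z) - z‖ := abs_re_le_norm _
    _ ≤ ‖z‖ ^ 2 * (1 - ‖z‖)⁻¹ / 2 := norm_log_one_add_sub_self_le (by linarith)
    _ ≤ ‖z‖ ^ 2 * 2 / 2 := by gcongr
    _ = ‖z‖ ^ 2 := by ring

end Complex

theorem tendstoUniformlyOn_of_dist_le {ι α β : Type*} [PseudoMetricSpace β] {F : ι → α → β}
    {f : α → β} {l : Filter ι} {s : Set α} {g : ι → ℝ} (hg : Tendsto g l (𝓝 0))
    (hF : ∀ᶠ i in l, ∀ x ∈ s, dist (f x) (F i x) ≤ g i) : TendstoUniformlyOn F f l s := by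
  rw [Metric.tendstoUniformlyOn_iff]
  intro δ hδ
  filter_upwards [hF, hg.eventually (gt_mem_nhds hδ)] with i hi hgi x hx
  exact (hi x hx).trans_lt hgi

section Estimates

variable {ε : ℝ} {W : ℂ}

theorem abs_log_norm_one_sub_mul_div_log_one_sub_sub_re_le (hε0 : 0 < ε) (hε : ε ≤ 1 / 2)
    (hW : ε * ‖W‖ ≤ 1 / 2) :
    |Real.log ‖1 - ε * W‖ / Real.log (1 - ε) - W.re| ≤ ε * (‖W‖ ^ 2 + ‖W‖) := by
  have hnum : |Real.log ‖1 - ε * W‖ + ε * W.re| ≤ ε ^ 2 * ‖W‖ ^ 2 := by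
    have h := abs_log_norm_one_add_sub_re_le (z := -(ε * W)) (by simpa [abs_of_pos hε0] using hW)
    simpa [← sub_eq_add_neg, abs_of_pos hε0, mul_pow] using h
  have hden : |Real.log (1 - ε) + ε| ≤ ε ^ 2 := by
    have h := abs_log_norm_one_add_sub_re_le (z := -(ε : ℂ)) (by simpa [abs_of_pos hε0] using hε)
    have : ‖1 - (ε : ℂ)‖ = 1 - ε := by
      rw [← ofReal_one, ← ofReal_sub, norm_real, Real.norm_of_nonneg (by linarith)]
    simpa [← sub_eq_add_neg, this, abs_of_pos hε0] using h
  have hlog : ε ≤ -Real.log (1 - ε) := by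
    linarith [Real.log_le_sub_one_of_pos (show 0 < 1 - ε by linarith)]
  have hL : Real.log (1 - ε) < 0 := by linarith
  have hu : |W.re| ≤ ‖W‖ := abs_re_le_norm W
  rw [div_sub' hL.ne, abs_div, abs_of_neg hL, div_le_iff₀ (by linarith)]
  calc |Real.log ‖1 - ε * W‖ - Real.log (1 - ε) * W.re|
      = |(Real.log ‖1 - ε * W‖ + ε * W.re) - W.re * (Real.log (1 - ε) + ε)| := by ring_nf
    _ ≤ |Real.log ‖1 - ε * W‖ + ε * W.re| + |W.re| * |Real.log (1 - ε) + ε| := by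
        rw [← abs_mul]; exact abs_sub _ _
    _ ≤ ε ^ 2 * ‖W‖ ^ 2 + ‖W‖ * ε ^ 2 := by gcongr
    _ = ε * (‖W‖ ^ 2 + ‖W‖) * ε := by ring
    _ ≤ ε * (‖W‖ ^ 2 + ‖W‖) * -Real.log (1 - ε) := by gcongr

theorem abs_two_mul_im_div_sub_im_le (hε0 : 0 ≤ ε) (hW : ε * ‖W‖ ≤ 1 / 2) :
    |2 * W.im / (‖1 - ε * W‖ + (1 - ε * W.re)) - W.im| ≤ 2 * ε * ‖W‖ ^ 2 := by
  set s := ‖1 - ε * W‖ + (1 - ε * W.re)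
  have hεu : |ε * W.re| ≤ ε * ‖W‖ := by
    rw [abs_mul, abs_of_nonneg hε0]; gcongr; exact abs_re_le_norm W
  have hnorm : |1 - ‖1 - ε * W‖| ≤ ε * ‖W‖ := by
    simpa [norm_mul, abs_of_nonneg hε0] using abs_norm_sub_norm_le (1 : ℂ) (1 - ε * W)
  have hs : 1 ≤ s := by
    simp only [s]; linarith [abs_le.1 hεu, abs_le.1 hnorm]
  have h2s : |2 - s| ≤ 2 * (ε * ‖W‖) := by
    calc |2 - s| = |(1 - ‖1 - ε * W‖) + ε * W.re| := by simp only [s]; ring_nf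
      _ ≤ 2 * (ε * ‖W‖) := by linarith [abs_add_le (1 - ‖1 - ε * W‖) (ε * W.re)]
  have hs0 : 0 < s := by linarith
  rw [div_sub' hs0.ne', abs_div, abs_of_pos hs0, div_le_iff₀ hs0]
  calc |2 * W.im - s * W.im| = |W.im| * |2 - s| := by rw [← abs_mul]; ring_nf
    _ ≤ ‖W‖ * (2 * (ε * ‖W‖)) := by gcongr; exact abs_im_le_norm W
    _ = 2 * ε * ‖W‖ ^ 2 * 1 := by ring
    _ ≤ 2 * ε * ‖W‖ ^ 2 * s := by gcongr

end Estimates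

def IsFundamentalConjugacy (H : ℝ → ℂ → ℂ) : Prop :=
  ∀ ε ∈ Ioo (0:ℝ) 1, ∀ ρ t : ℝ, 0 < ρ → 0 < t → t < 2 * Real.pi →
    H ε (((1 / ε : ℝ) : ℂ) + (ρ : ℂ) * Complex.exp ((t : ℂ) * Complex.I)) =
      (((Real.log ρ - Real.log (1 / ε)) / Real.log (1 - ε) : ℝ) : ℂ) +
      ((2 * (1 / ε) * Real.tan ((Real.pi - t) / 2) : ℝ) : ℂ) * Complex.I

namespace IsFundamentalConjugacy

variable {H : ℝ → ℂ → ℂ} {ε : ℝ} {W : ℂ}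

theorem apply_eq (hH : IsFundamentalConjugacy H) (hε : ε ∈ Ioo 0 1)
    (hW : 1 - ε * W ∈ slitPlane) :
    H ε W = ((Real.log ‖1 - ε * W‖ / Real.log (1 - ε) : ℝ) : ℂ) +
      ((2 * W.im / (‖1 - ε * W‖ + (1 - ε * W.re)) : ℝ) : ℂ) * I := by
  set ζ := 1 - ε * W
  set ξ := ((1 / ε : ℝ) : ℂ) - W
  have hε0 : ε ≠ 0 := hε.1.ne'
  have hζ0 : ζ ≠ 0 := slitPlane_ne_zero hW
  have hξζ : ξ = ((1 / ε : ℝ) : ℂ) * ζ := by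
    simp only [ξ, ζ]
    push_cast
    rw [mul_sub, mul_one, ← mul_assoc, one_div_mul_cancel (by exact_mod_cast hε0), one_mul]
  have harg : arg ξ = arg ζ := by rw [hξζ, arg_real_mul _ (by simpa using hε.1)]
  have hnorm : ‖ξ‖ = ‖ζ‖ / ε := by
    rw [hξζ, norm_mul, norm_real, Real.norm_of_nonneg (by simpa using hε.1.le)]
    ring
  have hξ0 : 0 < ‖ξ‖ := by rw [hnorm]; exact div_pos (norm_pos_iff.2 hζ0) hε.1
  have hpolar : W = ((1 / ε : ℝ) : ℂ) + ‖ξ‖ * exp (((Real.pi + arg ξ : ℝ) : ℂ) * I) := by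
    rw [← neg_eq_norm_mul_exp_pi_add_arg]; ring
  have ht := pi_add_arg_mem_Ioo (harg ▸ (mem_slitPlane_iff_arg.1 hW).1)
  have hHW := hH ε hε _ _ hξ0 ht.1 ht.2
  rw [← hpolar] at hHW
  rw [hHW, hnorm, harg, show (Real.pi - (Real.pi + arg ζ)) / 2 = -(arg ζ / 2) by ring,
    Real.tan_neg, tan_arg_div_two, Real.log_div (norm_ne_zero_iff.2 hζ0) hε0,
    Real.log_div one_ne_zero hε0, Real.log_one]
  simp only [ζ, sub_re, sub_im, one_re, one_im, re_ofReal_mul, im_ofReal_mul]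
  congr 3
  · ring
  · field_simp
    ring

theorem norm_apply_sub_le (hH : IsFundamentalConjugacy H) (hε0 : 0 < ε) (hε : ε ≤ 1 / 2)
    (hW : ε * ‖W‖ ≤ 1 / 2) :
    ‖H ε W - W‖ ≤ ε * (3 * ‖W‖ ^ 2 + ‖W‖) := by
  have hmem : 1 - ε * W ∈ slitPlane := by
    rw [sub_eq_add_neg]
    exact mem_slitPlane_of_norm_lt_one (by simp [abs_of_pos hε0]; linarith)
  rw [hH.apply_eq ⟨hε0, by linarith⟩ hmem]
  refine (norm_le_abs_re_add_abs_im _).trans ?_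
  simp only [sub_re, add_re, ofReal_re, mul_re, I_re, ofReal_im, I_im, sub_im, add_im, mul_im,
    mul_zero, sub_zero, mul_one, zero_add, add_zero]
  have hre := abs_log_norm_one_sub_mul_div_log_one_sub_sub_re_le hε0 hε hW
  have him := abs_two_mul_im_div_sub_im_le hε0.le hW
  linarith

end IsFundamentalConjugacy

theorem notMem_ray_of_mul_norm_lt_one {ε : ℝ} {W : ℂ} (hε : 0 < ε) (hW : ε * ‖W‖ < 1) :
    W ∉ {w : ℂ | w.im = 0 ∧ (1 / ε : ℝ) ≤ w.re} := by
  rintro ⟨-, hre⟩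
  rw [one_div, inv_le_iff_one_le_mul₀ hε] at hre
  nlinarith [re_le_norm W]

/-- The conjugacies `H_ε` of the fundamental model converge uniformly to the identity on
bounded sets as `ε → 0` (Section 5): with `R_ε = 1 − ε`, `a_ε = 1/ε`, `I_ε = [a_ε, ∞)`,
and `H_ε(a_ε + ρ e^{it}) = (log ρ − log a_ε)/log R_ε + 2 a_ε i·tan((π−t)/2)`, every
bounded `D ⊂ ℂ` is contained in `ℂ ∖ I_ε` for all small `ε`, and
`sup_{W ∈ D} |H_ε(W) − W| → 0` as `ε → 0`. -/
theorem fundamental_conjugacy_tends_to_identity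
    (H : ℝ → ℂ → ℂ)
    (hH : ∀ ε ∈ Ioo (0:ℝ) 1, ∀ ρ t : ℝ, 0 < ρ → 0 < t → t < 2 * Real.pi →
      H ε (((1 / ε : ℝ) : ℂ) + (ρ : ℂ) * Complex.exp ((t : ℂ) * Complex.I)) =
        (((Real.log ρ - Real.log (1 / ε)) / Real.log (1 - ε) : ℝ) : ℂ) +
        ((2 * (1 / ε) * Real.tan ((Real.pi - t) / 2) : ℝ) : ℂ) * Complex.I) :
    ∀ D : Set ℂ, Bornology.IsBounded D →
      (∃ ε₀ : ℝ, 0 < ε₀ ∧ ε₀ ≤ 1 ∧ ∀ ε : ℝ, 0 < ε → ε < ε₀ →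
        D ⊆ {w : ℂ | w.im = 0 ∧ (1 / ε : ℝ) ≤ w.re}ᶜ) ∧
      TendstoUniformlyOn (fun ε W => H ε W) (fun W => W) (𝓝[Ioo (0:ℝ) 1] 0) D := by
  intro D hD
  obtain ⟨M, hM, hDM⟩ : ∃ M, 1 ≤ M ∧ ∀ W ∈ D, ‖W‖ ≤ M := by
    obtain ⟨C, hC⟩ := isBounded_iff_forall_norm_le.1 hD
    exact ⟨max C 1, le_max_right _ _, fun W hW => (hC W hW).trans (le_max_left _ _)⟩
  have hsmall : ∀ ε, 0 < ε → ε < 1 / (2 * M) → ε ≤ 1 / 2 ∧ ∀ W ∈ D, ε * ‖W‖ ≤ 1 / 2 := by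
    intro ε hε0 hε
    rw [lt_div_iff₀ (by positivity)] at hε
    refine ⟨by nlinarith, fun W hW => ?_⟩
    nlinarith [hDM W hW]
  refine ⟨⟨1 / (2 * M), by positivity, by rw [div_le_one (by positivity)]; linarith, ?_⟩, ?_⟩
  · intro ε hε0 hε W hW
    exact notMem_ray_of_mul_norm_lt_one hε0 (by linarith [(hsmall ε hε0 hε).2 W hW])
  refine tendstoUniformlyOn_of_dist_le (g := fun ε => ε * (3 * M ^ 2 + M))
    (((continuous_mul_const _).tendsto' 0 0 (zero_mul _)).mono_left nhdsWithin_le_nhds) ?_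
  filter_upwards [self_mem_nhdsWithin, mem_nhdsWithin_of_mem_nhds (Iio_mem_nhds
    (show 0 < 1 / (2 * M) by positivity))] with ε hε hεM W hW
  obtain ⟨hε2, hεD⟩ := hsmall ε hε.1 hεM
  have hWM := hDM W hW
  rw [dist_comm, dist_eq_norm]
  calc ‖H ε W - W‖ ≤ ε * (3 * ‖W‖ ^ 2 + ‖W‖) :=
        IsFundamentalConjugacy.norm_apply_sub_le hH hε.1 hε2 (hεD W hW)
    _ ≤ ε * (3 * M ^ 2 + M) := mul_le_mul_of_nonneg_left (by gcongr) hε.1.le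
end

section
/- Fix γ with 1/2 < γ < 1 and for ε ∈ (0,1) define Q_ε = {W = a_ε + ρ e^{i(π − t)} : |t| ≤ ε^γ, |ρ − a_ε| ≤ a_ε · sin(ε^γ)}. Then: (i) for every bounded set D ⊂ ℂ there exists ε₀ > 0 with D ⊆ Q_ε for all ε ∈ (0, ε₀); and (ii) there exist C > 0 and ε₁ > 0 such that for all ε ∈ (0, ε₁) and all W ∈ Q_ε, |Re W − Re H_ε(W)| ≤ C ε^{2γ−1} and |Im W − Im H_ε(W)| ≤ C ε^{2γ−1}. -/
/-!
For (i), a point `W` with `‖W‖ ≤ M` is written in polar form around `a_ε` with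
`ρ = ‖a_ε - W‖` and `t = -arg (a_ε - W)`. Then `|ρ - a_ε| ≤ M`, and Jordan's inequality gives
`|t| ≲ M / a_ε = M ε`; since `γ < 1` these lie below `a_ε sin ε^γ ≍ ε^(γ-1)` and `ε^γ` for
small `ε`.

For (ii), put `s = ε^γ` and `ρ = a_ε (1 + δ)` with `|δ| ≤ s`. The real parts differ by
`ρ (1 - cos t)` plus `log (1 + δ) / log (1 - ε) + δ / ε`, each `O(s² / ε)` by the second-order
Taylor bounds of `cos` and `log`; the imaginary parts differ by
`2 tan (t/2) · (ρ cos² (t/2) - a_ε) = O(s · a_ε s)`. Finally `s² / ε = ε^(2γ-1)`.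
-/

open Complex Set Metric Filter Topology

/-- The region `Q_ε = {W = a_ε + ρ e^{i(π−t)} : |t| ≤ ε^γ, |ρ − a_ε| ≤ a_ε sin(ε^γ)}`
(Section 5), where `a_ε = 1/ε`. -/
def Qregion (γ ε : ℝ) : Set ℂ :=
  {W : ℂ | ∃ ρ t : ℝ, |t| ≤ ε ^ γ ∧ |ρ - 1 / ε| ≤ (1 / ε) * Real.sin (ε ^ γ) ∧
    W = ((1 / ε : ℝ) : ℂ) + (ρ : ℂ) * Complex.exp (((Real.pi - t : ℝ) : ℂ) * Complex.I)}

open scoped Real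

lemma abs_log_one_add_sub_self_le {x : ℝ} (hx : |x| ≤ 1 / 2) :
    |Real.log (1 + x) - x| ≤ 2 * x ^ 2 := by
  have h := Real.abs_log_sub_add_sum_range_le (x := -x) (by rw [abs_neg]; linarith) 1
  simp only [Finset.sum_range_one, zero_add, pow_one, Nat.cast_zero, div_one, sub_neg_eq_add,
    abs_neg, neg_add_eq_sub, Nat.reduceAdd] at h
  refine h.trans ?_
  rw [div_le_iff₀ (by linarith)]
  nlinarith [abs_nonneg x, sq_abs x]

lemma abs_log_one_add_div_log_one_sub_add_div_le {ε δ s : ℝ} (hε : 0 < ε) (hεs : ε ≤ s)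
    (hs : s ≤ 1 / 2) (hδ : |δ| ≤ s) :
    |Real.log (1 + δ) / Real.log (1 - ε) + δ / ε| ≤ 4 * s ^ 2 / ε := by
  have hLε : |Real.log (1 - ε) + ε| ≤ 2 * ε ^ 2 := by
    have := abs_log_one_add_sub_self_le (x := -ε) (by rw [abs_neg, abs_of_pos hε]; linarith)
    rwa [← sub_eq_add_neg, sub_neg_eq_add, neg_sq] at this
  have hL : Real.log (1 - ε) ≤ -ε := by
    linarith [Real.log_le_sub_one_of_pos (x := 1 - ε) (by linarith)]
  set L := Real.log (1 - ε)
  have hlog : |Real.log (1 + δ) - δ| ≤ 2 * δ ^ 2 := abs_log_one_add_sub_self_le (hδ.trans hs)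
  have hδ2 : δ ^ 2 ≤ s ^ 2 := sq_le_sq' (abs_le.1 hδ).1 (abs_le.1 hδ).2
  have hnum : |ε * (Real.log (1 + δ) - δ) + δ * (L + ε)| ≤ 4 * ε * s ^ 2 := by
    calc _ ≤ ε * |Real.log (1 + δ) - δ| + |δ| * |L + ε| := by
          rw [← abs_of_pos hε, ← abs_mul, ← abs_mul, abs_of_pos hε]; exact abs_add_le _ _
      _ ≤ ε * (2 * s ^ 2) + s * (2 * ε ^ 2) := by gcongr <;> linarith [abs_nonneg δ]
      _ ≤ 4 * ε * s ^ 2 := by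
          nlinarith [mul_le_mul_of_nonneg_left hεs (mul_nonneg hε.le (hε.le.trans hεs))]
  have hden : ε ^ 2 ≤ |ε * L| := by
    rw [abs_mul, abs_of_pos hε, abs_of_neg (by linarith), sq]; gcongr; linarith
  calc _ = |ε * (Real.log (1 + δ) - δ) + δ * (L + ε)| / |ε * L| := by
        rw [← abs_div]; congr 1; field_simp [show L ≠ 0 by linarith]; ring
    _ ≤ 4 * ε * s ^ 2 / ε ^ 2 := div_le_div₀ (by positivity) hnum (by positivity) hden
    _ = 4 * s ^ 2 / ε := by field_simp

lemma abs_sub_mul_cos_sub_log_div_log_le {a ε s ρ t : ℝ} (hε : 0 < ε) (haε : a * ε = 1)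
    (hεs : ε ≤ s) (hs : s ≤ 1 / 2) (ht : |t| ≤ s) (hρ : |ρ - a| ≤ a * s) :
    |(a - ρ * Real.cos t) - (Real.log ρ - Real.log a) / Real.log (1 - ε)| ≤ 5 * (a * s ^ 2) := by
  have ha : 0 < a := pos_of_mul_pos_left (haε ▸ one_pos) hε.le
  set δ := ε * ρ - 1 with hδdef
  have hρa : ρ - a = δ / ε := by field_simp; linear_combination -haε
  have hδ : |δ| ≤ s := by
    have : |δ| = ε * |ρ - a| := by rw [hρa, abs_div, abs_of_pos hε]; field_simp
    rw [this]; calc ε * |ρ - a| ≤ ε * (a * s) := by gcongr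
      _ = s := by linear_combination s * haε
  have hδs := abs_le.1 hδ
  have hρ0 : 0 < ρ := by nlinarith [abs_le.1 hρ]
  have hlog : Real.log ρ - Real.log a = Real.log (1 + δ) := by
    rw [← Real.log_div hρ0.ne' ha.ne']
    congr 1
    rw [div_eq_iff ha.ne', hδdef]
    linear_combination (-ρ) * haε
  have hcos : |ρ * (1 - Real.cos t)| ≤ a * s ^ 2 := by
    have h1 : 1 - Real.cos t ≤ s ^ 2 / 2 := by
      nlinarith [Real.one_sub_sq_div_two_le_cos (x := t), sq_abs t, abs_nonneg t]
    have h0 : 0 ≤ 1 - Real.cos t := by linarith [Real.cos_le_one t]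
    rw [abs_of_nonneg (mul_nonneg hρ0.le h0)]
    calc ρ * (1 - Real.cos t) ≤ (a * (1 + s)) * (s ^ 2 / 2) :=
          mul_le_mul (by nlinarith [abs_le.1 hρ]) h1 h0 (by nlinarith)
      _ ≤ a * s ^ 2 := by nlinarith [mul_nonneg ha.le (sq_nonneg s)]
  have hmain := abs_log_one_add_div_log_one_sub_add_div_le hε hεs hs hδ
  rw [show 4 * s ^ 2 / ε = 4 * (a * s ^ 2) by
    rw [div_eq_iff hε.ne']; linear_combination (-4 * s ^ 2) * haε]
    at hmain
  calc _ = |ρ * (1 - Real.cos t) - (Real.log (1 + δ) / Real.log (1 - ε) + δ / ε)| := by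
        rw [hlog, ← hρa]; ring_nf
    _ ≤ |ρ * (1 - Real.cos t)| + |Real.log (1 + δ) / Real.log (1 - ε) + δ / ε| := abs_sub _ _
    _ ≤ 5 * (a * s ^ 2) := by linarith

lemma abs_mul_sin_sub_two_mul_tan_half_le {a s ρ t : ℝ} (ha : 0 < a) (hs : s ≤ 1)
    (ht : |t| ≤ s) (hρ : |ρ - a| ≤ a * s) :
    |ρ * Real.sin t - 2 * a * Real.tan (t / 2)| ≤ 4 * (a * s ^ 2) := by
  have hfactor : ρ * Real.sin t - 2 * a * Real.tan (t / 2) =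
      2 * Real.sin (t / 2) / Real.cos (t / 2) * (ρ * Real.cos (t / 2) ^ 2 - a) := by
    rw [Real.tan_eq_sin_div_cos, show t = 2 * (t / 2) by ring, Real.sin_two_mul,
      show 2 * (t / 2) / 2 = t / 2 by ring]
    field_simp
  set c := Real.cos (t / 2)
  set σ := Real.sin (t / 2)
  have hσ : |σ| ≤ s / 2 := by
    calc |σ| ≤ |t / 2| := Real.abs_sin_le_abs
      _ ≤ s / 2 := by rw [abs_div, abs_two]; linarith
  have hc : 1 / 2 ≤ c := by
    nlinarith [Real.one_sub_sq_div_two_le_cos (x := t / 2), sq_abs (t / 2), abs_nonneg t,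
      show |t / 2| = |t| / 2 by rw [abs_div, abs_two]]
  have hσc : σ ^ 2 + c ^ 2 = 1 := Real.sin_sq_add_cos_sq _
  have hρs := abs_le.1 hρ
  have hσ2 : σ ^ 2 ≤ s ^ 2 / 4 := by nlinarith [sq_abs σ, abs_nonneg σ]
  have hcorr : |ρ * c ^ 2 - a| ≤ 2 * a * s := by
    rw [show ρ * c ^ 2 - a = (ρ - a) * c ^ 2 - a * σ ^ 2 by linear_combination a * hσc, abs_le]
    constructor <;> nlinarith [sq_nonneg c, sq_nonneg σ, abs_nonneg t]
  have hquot : |2 * σ / c| ≤ 2 * s := by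
    rw [abs_div, abs_of_pos (show 0 < c by linarith), div_le_iff₀ (by linarith), abs_mul,
      abs_two]
    nlinarith [abs_nonneg σ]
  rw [hfactor, abs_mul]
  calc _ ≤ 2 * s * (2 * a * s) := by gcongr; linarith [abs_nonneg t]
    _ = 4 * (a * s ^ 2) := by ring

lemma exists_eq_add_mul_exp_pi_sub {a s M : ℝ} {W : ℂ} (ha : 0 < a) (hs : s ≤ 1)
    (hM : 8 * M ≤ a * s) (hW : ‖W‖ ≤ M) :
    ∃ ρ t : ℝ, |t| ≤ s ∧ |ρ - a| ≤ a * Real.sin s ∧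
      W = (a : ℂ) + ρ * Complex.exp ((π - t : ℝ) * I) := by
  have hM0 : 0 ≤ M := (norm_nonneg W).trans hW
  have hs0 : 0 ≤ s := nonneg_of_mul_nonneg_right (by linarith) ha
  have hMa : 8 * M ≤ a := hM.trans (mul_le_of_le_one_right ha.le hs)
  have hsin : s / 2 ≤ Real.sin s := by
    refine le_trans ?_ (Real.mul_le_sin hs0 (by linarith [Real.pi_gt_three]))
    rw [div_mul_eq_mul_div, div_le_div_iff₀ two_pos Real.pi_pos]
    nlinarith [Real.pi_lt_four]
  set u : ℂ := a - W
  have hnorm : |‖u‖ - a| ≤ M := by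
    simpa [u, abs_of_pos ha] using (abs_norm_sub_norm_le u a).trans (by simpa [u] using hW)
  have hre : 0 ≤ u.re := by
    simp only [u, sub_re, ofReal_re]; linarith [(abs_le.1 ((abs_re_le_norm W).trans hW)).2]
  have harg : |arg u| ≤ s := by
    have hsin_arg := Real.mul_le_sin (abs_nonneg _) (abs_arg_le_pi_div_two_iff.2 hre)
    rw [← Real.abs_sin_eq_sin_abs_of_abs_le_pi (abs_arg_le_pi u), Complex.sin_arg, abs_div,
      abs_norm] at hsin_arg
    have him : |u.im| ≤ M := by simpa [u] using (abs_im_le_norm W).trans hW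
    have hu : 7 * a / 8 ≤ ‖u‖ := by linarith [abs_le.1 hnorm]
    rw [le_div_iff₀ (by linarith)] at hsin_arg
    have : 2 * |arg u| * ‖u‖ ≤ π * M := by
      field_simp at hsin_arg; nlinarith [Real.pi_pos]
    nlinarith [Real.pi_lt_four, abs_nonneg (arg u)]
  refine ⟨‖u‖, -arg u, by rwa [abs_neg], by nlinarith, ?_⟩
  rw [sub_neg_eq_add, ofReal_add, add_mul, Complex.exp_add, exp_pi_mul_I, neg_one_mul, mul_neg,
    norm_mul_exp_arg_mul_I]
  simp [u]

lemma subset_Qregion_of_subset_closedBall {γ ε M : ℝ} {D : Set ℂ} (hγ : 0 ≤ γ) (hε : 0 < ε)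
    (hε1 : ε ≤ 1) (hD : D ⊆ closedBall 0 M) (hM : 8 * M * ε ^ (1 - γ) ≤ 1) :
    D ⊆ Qregion γ ε := by
  intro W hW
  have hsplit : ε ^ (1 - γ) * ε ^ γ = ε := by
    rw [← Real.rpow_add hε, sub_add_cancel, Real.rpow_one]
  have h8M : 8 * M ≤ 1 / ε * ε ^ γ := by
    rw [one_div_mul_eq_div, le_div_iff₀ hε]
    calc 8 * M * ε = 8 * M * ε ^ (1 - γ) * ε ^ γ := by rw [mul_assoc _ (ε ^ (1 - γ)), hsplit]
      _ ≤ 1 * ε ^ γ := by gcongr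
      _ = ε ^ γ := one_mul _
  exact exists_eq_add_mul_exp_pi_sub (one_div_pos.2 hε)
    (Real.rpow_le_one hε.le hε1 hγ) h8M (by simpa using hD hW)

lemma exists_forall_rpow_le {p c : ℝ} (hp : 0 < p) (hc : 0 < c) :
    ∃ ε₀ : ℝ, 0 < ε₀ ∧ ε₀ ≤ 1 ∧ ∀ ε : ℝ, 0 < ε → ε < ε₀ → ε ^ p ≤ c := by
  refine ⟨min (c ^ p⁻¹) 1, lt_min (Real.rpow_pos_of_pos hc _) one_pos, min_le_right _ _,
    fun ε hε hεε₀ => ?_⟩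
  calc ε ^ p ≤ (c ^ p⁻¹) ^ p :=
        Real.rpow_le_rpow hε.le (hεε₀.le.trans (min_le_left _ _)) hp.le
    _ = c := Real.rpow_inv_rpow hc.le hp.ne'

lemma exists_forall_subset_Qregion {γ : ℝ} {D : Set ℂ} (hγ0 : 0 ≤ γ) (hγ1 : γ < 1)
    (hD : Bornology.IsBounded D) :
    ∃ ε₀ : ℝ, 0 < ε₀ ∧ ε₀ ≤ 1 ∧ ∀ ε : ℝ, 0 < ε → ε < ε₀ → D ⊆ Qregion γ ε := by
  obtain ⟨M, hM⟩ := hD.subset_closedBall 0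
  obtain ⟨ε₀, hε₀, hε₀1, hsmall⟩ :=
    exists_forall_rpow_le (sub_pos.2 hγ1) (by positivity : 0 < 1 / (8 * max M 1))
  refine ⟨ε₀, hε₀, hε₀1, fun ε hε hεε₀ => subset_Qregion_of_subset_closedBall hγ0 hε
    (hεε₀.trans_le hε₀1).le (hM.trans (closedBall_subset_closedBall (le_max_left M 1))) ?_⟩
  rw [← le_div_iff₀' (by positivity)]
  exact hsmall ε hε hεε₀

lemma rpow_two_mul_sub_one_eq {ε : ℝ} (hε : 0 < ε) (γ : ℝ) :
    ε ^ (2 * γ - 1) = 1 / ε * (ε ^ γ) ^ 2 := by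
  rw [sub_eq_add_neg, Real.rpow_add hε, Real.rpow_neg_one, mul_comm, ← Real.rpow_natCast,
    ← Real.rpow_mul hε.le, one_div, mul_comm (2 : ℝ), Nat.cast_ofNat]

lemma re_ofReal_add_mul_exp_pi_sub (a ρ t : ℝ) :
    ((a : ℂ) + ρ * Complex.exp ((π - t : ℝ) * I)).re = a - ρ * Real.cos t := by
  rw [add_re, ofReal_re, re_ofReal_mul, exp_ofReal_mul_I_re, Real.cos_pi_sub]; ring

lemma im_ofReal_add_mul_exp_pi_sub (a ρ t : ℝ) :
    ((a : ℂ) + ρ * Complex.exp ((π - t : ℝ) * I)).im = ρ * Real.sin t := by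
  rw [add_im, ofReal_im, im_ofReal_mul, exp_ofReal_mul_I_im, Real.sin_pi_sub, zero_add]

/-- Estimate for `H_ε` on the regions `Q_ε` (Section 5): for fixed `1/2 < γ < 1`,
(i) every bounded set is contained in `Q_ε` for all small `ε > 0`, and
(ii) `|Re W − Re H_ε(W)| = O(ε^{2γ−1})` and `|Im W − Im H_ε(W)| = O(ε^{2γ−1})`
uniformly on `Q_ε`. -/
theorem H_estimate_on_Q
    (γ : ℝ) (hγ1 : 1 / 2 < γ) (hγ2 : γ < 1)
    (H : ℝ → ℂ → ℂ)
    (hH : ∀ ε ∈ Ioo (0:ℝ) 1, ∀ ρ t : ℝ, 0 < ρ → 0 < t → t < 2 * Real.pi →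
      H ε (((1 / ε : ℝ) : ℂ) + (ρ : ℂ) * Complex.exp ((t : ℂ) * Complex.I)) =
        (((Real.log ρ - Real.log (1 / ε)) / Real.log (1 - ε) : ℝ) : ℂ) +
        ((2 * (1 / ε) * Real.tan ((Real.pi - t) / 2) : ℝ) : ℂ) * Complex.I) :
    (∀ D : Set ℂ, Bornology.IsBounded D →
      ∃ ε₀ : ℝ, 0 < ε₀ ∧ ε₀ ≤ 1 ∧ ∀ ε : ℝ, 0 < ε → ε < ε₀ → D ⊆ Qregion γ ε) ∧
    (∃ C : ℝ, 0 < C ∧ ∃ ε₁ : ℝ, 0 < ε₁ ∧ ε₁ ≤ 1 ∧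
      ∀ ε : ℝ, 0 < ε → ε < ε₁ → ∀ W ∈ Qregion γ ε,
        |W.re - (H ε W).re| ≤ C * ε ^ (2 * γ - 1) ∧
        |W.im - (H ε W).im| ≤ C * ε ^ (2 * γ - 1)) := by
  have hγ0 : 0 < γ := by linarith
  refine ⟨fun D hD => exists_forall_subset_Qregion hγ0.le hγ2 hD, ?_⟩
  obtain ⟨ε₁, hε₁, hε₁1, hsmall⟩ := exists_forall_rpow_le hγ0 (by norm_num : (0 : ℝ) < 1 / 2)
  refine ⟨5, by norm_num, ε₁, hε₁, hε₁1, fun ε hε hεε₁ W ⟨ρ, t, ht, hρ, hW⟩ => ?_⟩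
  have hε1 : ε < 1 := hεε₁.trans_le hε₁1
  have hs : ε ^ γ ≤ 1 / 2 := hsmall ε hε hεε₁
  have hεs : ε ≤ ε ^ γ := Real.self_le_rpow_of_le_one hε.le hε1.le hγ2.le
  have hρ' : |ρ - 1 / ε| ≤ 1 / ε * ε ^ γ :=
    hρ.trans (by gcongr; exact Real.sin_le (by positivity))
  have hρ0 : 0 < ρ := by nlinarith [abs_le.1 hρ', one_div_pos.2 hε]
  rw [hW, hH ε ⟨hε, hε1⟩ ρ (π - t) hρ0 (by linarith [abs_le.1 ht, Real.pi_gt_three])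
    (by linarith [abs_le.1 ht, Real.pi_gt_three]), re_ofReal_add_mul_exp_pi_sub,
    im_ofReal_add_mul_exp_pi_sub, sub_sub_cancel, rpow_two_mul_sub_one_eq hε]
  simp only [add_re, ofReal_re, re_ofReal_mul, I_re, mul_zero, add_zero, add_im, ofReal_im,
    im_ofReal_mul, I_im, mul_one, zero_add]
  exact ⟨abs_sub_mul_cos_sub_log_div_log_le hε (one_div_mul_cancel hε.ne') hεs hs ht hρ',
    (abs_mul_sin_sub_two_mul_tan_half_le (one_div_pos.2 hε) (hs.trans (by norm_num)) ht
      hρ').trans (by gcongr; norm_num)⟩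
end

section
/- Let R > 0 and M > 0. There exist constants R₀ ≥ R and C > 0, depending only on R and M, with the following property: for every τ ∈ ℂ with |τ| > 1 and |1/(1 − τ)| ≥ R₀, and every holomorphic map f on {w ∈ ℂ : |w| ≥ R} satisfying |f(w) − (τw + 1)| ≤ M/|w| for all |w| ≥ R, there exists b ∈ ℂ with |b| ≥ R, f(b) = b, and |b − 1/(1 − τ)| ≤ C. -/
/-!
Writing `f w = τ w + 1 + e w` with `‖e w‖ ≤ M / ‖w‖`, and `a = 1 / (1 - τ)`, the fixed points
of `f` are exactly the fixed points of `Φ w = a (1 + e w)`. On the disc `‖w - a‖ ≤ 2M` one has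
`‖w‖ ≥ ‖a‖ / 2`, so `‖Φ w - a‖ = ‖a‖ ‖e w‖ ≤ 2M`, and the Cauchy estimate on the disc of radius
`‖w‖ / 2` gives `‖Φ' w‖ ≤ ‖a‖ · 4M / ‖w‖² ≤ 16M / ‖a‖ ≤ 1/2` once `‖a‖ ≥ 32M`. Hence `Φ` is a
contraction of this disc, and its Banach fixed point is the required `b`.
-/

open Complex Set Metric Filter Topology

open scoped NNReal

theorem Convex.exists_fixedPoint_of_nnnorm_deriv_le {𝕜 : Type*} [RCLike 𝕜] {g : 𝕜 → 𝕜}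
    {s : Set 𝕜} {K : ℝ≥0} (hs : Convex ℝ s) (hsc : IsClosed s) (hne : s.Nonempty)
    (hmaps : MapsTo g s s) (hg : ∀ w ∈ s, DifferentiableAt 𝕜 g w)
    (hg' : ∀ w ∈ s, ‖deriv g w‖₊ ≤ K) (hK : K < 1) :
    ∃ w ∈ s, g w = w := by
  obtain ⟨x, hx⟩ := hne
  have hcontr : ContractingWith K (hmaps.restrict g s s) :=
    ⟨hK, (hs.lipschitzOnWith_of_nnnorm_deriv_le hg hg').mapsToRestrict hmaps⟩
  obtain ⟨w, hw, hfix, -⟩ :=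
    hcontr.exists_fixedPoint' hsc.isComplete hmaps hx (edist_ne_top x (g x))
  exact ⟨w, hw, hfix⟩

lemma norm_le_two_mul_norm_of_mem_closedBall {E : Type*} [SeminormedAddCommGroup E] {a w : E}
    {r : ℝ} (ha : 2 * r ≤ ‖a‖) (hw : w ∈ closedBall a r) : ‖a‖ ≤ 2 * ‖w‖ := by
  have := norm_sub_norm_le a w
  rw [mem_closedBall_iff_norm, norm_sub_rev] at hw
  linarith

section Exterior

variable {e : ℂ → ℂ} {R M : ℝ} {b : ℂ}

lemma closedBall_half_norm_subset (hb : 2 * R ≤ ‖b‖) :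
    closedBall b (‖b‖ / 2) ⊆ {w : ℂ | R ≤ ‖w‖} := by
  intro z hz
  have := norm_sub_norm_le b z
  rw [mem_closedBall_iff_norm, norm_sub_rev] at hz
  show R ≤ ‖z‖
  linarith

lemma DifferentiableOn.differentiableAt_of_two_mul_le_norm
    (he : DifferentiableOn ℂ e {w : ℂ | R ≤ ‖w‖}) (hR : 0 < R) (hb : 2 * R ≤ ‖b‖) :
    DifferentiableAt ℂ e b :=
  he.differentiableAt <|
    mem_of_superset (closedBall_mem_nhds b (by linarith)) (closedBall_half_norm_subset hb)

lemma norm_deriv_le_of_norm_le_div_norm (he : DifferentiableOn ℂ e {w : ℂ | R ≤ ‖w‖})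
    (hbound : ∀ w : ℂ, R ≤ ‖w‖ → ‖e w‖ ≤ M / ‖w‖) (hR : 0 < R) (hM : 0 ≤ M)
    (hb : 2 * R ≤ ‖b‖) :
    ‖deriv e b‖ ≤ 4 * M / ‖b‖ ^ 2 := by
  have hr : 0 < ‖b‖ / 2 := by linarith
  have hd : DiffContOnCl ℂ e (ball b (‖b‖ / 2)) := by
    refine DifferentiableOn.diffContOnCl ?_
    rw [closure_ball b hr.ne']
    exact he.mono (closedBall_half_norm_subset hb)
  have hsphere : ∀ z ∈ sphere b (‖b‖ / 2), ‖e z‖ ≤ M / (‖b‖ / 2) := by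
    intro z hz
    have hzb : ‖b‖ / 2 ≤ ‖z‖ := by
      have := norm_sub_norm_le b z
      rw [mem_sphere_iff_norm, norm_sub_rev] at hz
      linarith
    exact (hbound z (by linarith)).trans (div_le_div_of_nonneg_left hM hr hzb)
  calc ‖deriv e b‖ ≤ M / (‖b‖ / 2) / (‖b‖ / 2) :=
        norm_deriv_le_of_forall_mem_sphere_norm_le hr hd hsphere
    _ = 4 * M / ‖b‖ ^ 2 := by field_simp; ring

theorem exists_fixedPoint_mul_one_add (he : DifferentiableOn ℂ e {w : ℂ | R ≤ ‖w‖})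
    (hbound : ∀ w : ℂ, R ≤ ‖w‖ → ‖e w‖ ≤ M / ‖w‖) (hR : 0 < R) (hM : 0 ≤ M) {a : ℂ}
    (ha : 4 * R + 32 * M ≤ ‖a‖) :
    ∃ w ∈ closedBall a (2 * M), a * (1 + e w) = w := by
  have hnorm : ∀ w ∈ closedBall a (2 * M), ‖a‖ ≤ 2 * ‖w‖ := fun w hw ↦
    norm_le_two_mul_norm_of_mem_closedBall (by linarith) hw
  have h2R : ∀ w ∈ closedBall a (2 * M), 2 * R ≤ ‖w‖ := fun w hw ↦ by
    linarith [hnorm w hw]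
  have hdiff : ∀ w ∈ closedBall a (2 * M), DifferentiableAt ℂ (fun w ↦ a * (1 + e w)) w :=
    fun w hw ↦ ((he.differentiableAt_of_two_mul_le_norm hR (h2R w hw)).const_add 1).const_mul a
  refine (convex_closedBall a (2 * M)).exists_fixedPoint_of_nnnorm_deriv_le isClosed_closedBall
    ⟨a, mem_closedBall_self (by linarith)⟩ ?_ hdiff ?_ (show (2⁻¹ : ℝ≥0) < 1 by norm_num)
  · intro w hw
    have hw0 : 0 < ‖w‖ := by linarith [h2R w hw]
    rw [mem_closedBall_iff_norm, show a * (1 + e w) - a = a * e w by ring, norm_mul]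
    calc ‖a‖ * ‖e w‖ ≤ ‖a‖ * (M / ‖w‖) := by
          gcongr; exact hbound w (by linarith [h2R w hw])
      _ ≤ 2 * M := by
          rw [mul_div_assoc', div_le_iff₀ hw0]; nlinarith [hnorm w hw]
  · intro w hw
    have hw0 : 0 < ‖w‖ := by linarith [h2R w hw]
    have hderiv : deriv (fun w ↦ a * (1 + e w)) w = a * deriv e w := by
      rw [deriv_const_mul _ ((he.differentiableAt_of_two_mul_le_norm hR (h2R w hw)).const_add 1),
        deriv_const_add]
    rw [← NNReal.coe_le_coe, coe_nnnorm, hderiv, norm_mul, NNReal.coe_inv, NNReal.coe_ofNat]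
    calc ‖a‖ * ‖deriv e w‖ ≤ ‖a‖ * (4 * M / ‖w‖ ^ 2) := by
          gcongr; exact norm_deriv_le_of_norm_le_div_norm he hbound hR hM (h2R w hw)
      _ ≤ 2⁻¹ := by
          rw [mul_div_assoc', div_le_iff₀ (by positivity)]
          nlinarith [hnorm w hw, mul_le_mul_of_nonneg_left ha (norm_nonneg a)]

end Exterior

/-- The Rouché-theorem claim of Theorem 5.3, Case (b): a holomorphic map
`f(w) = τw + 1 + O(1/w)` on `{|w| ≥ R}`, with `|τ| > 1` and `1/(1−τ)` of large modulus,
has a fixed point `b = 1/(1−τ) + O(1)`; the constants `R₀` and `C` depend only on `R`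
and the constant `M` in the error bound. -/
theorem rouche_fixed_point
    (R M : ℝ) (hR : 0 < R) (hM : 0 < M) :
    ∃ R₀ : ℝ, R ≤ R₀ ∧ ∃ C : ℝ, 0 < C ∧
      ∀ τ : ℂ, 1 < ‖τ‖ → R₀ ≤ ‖1 / (1 - τ)‖ →
        ∀ f : ℂ → ℂ,
          DifferentiableOn ℂ f {w : ℂ | R ≤ ‖w‖} →
          (∀ w : ℂ, R ≤ ‖w‖ → ‖f w - (τ * w + 1)‖ ≤ M / ‖w‖) →
          ∃ b : ℂ, R ≤ ‖b‖ ∧ f b = b ∧ ‖b - 1 / (1 - τ)‖ ≤ C := by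
  refine ⟨4 * R + 32 * M, by linarith, 2 * M, by positivity, fun τ _ hτ f hf hbound ↦ ?_⟩
  have he : DifferentiableOn ℂ (fun w ↦ f w - (τ * w + 1)) {w : ℂ | R ≤ ‖w‖} :=
    hf.sub (by fun_prop)
  obtain ⟨b, hb, hfix⟩ := exists_fixedPoint_mul_one_add he hbound hR hM.le hτ
  have h1τ : 1 - τ ≠ 0 := fun h ↦ by
    rw [h, div_zero, norm_zero] at hτ
    linarith
  have hRb : R ≤ ‖b‖ := by
    linarith [norm_le_two_mul_norm_of_mem_closedBall (by linarith) hb]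
  refine ⟨b, hRb, ?_, mem_closedBall_iff_norm.mp hb⟩
  field_simp at hfix
  linear_combination hfix
end
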